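/- arXiv:2511.13573 — 10 statements merged into one kernel-verified Lean document; each statement's English description precedes it below -/
import Mathlib

section
/- For every integer n ≥ 1 there exists a 2-stretch correlated sampling algorithm for the probability simplex Δ_n. -/
open MeasureTheory
open scoped ENNReal

/-- `x ∈ Δ_n`: all coordinates in `[0,1]` and the coordinates sum to `1`. -/
def memSimplex (n : ℕ) (x : Fin n → ℝ) : Prop :=
  (∀ i, 0 ≤ x i ∧ x i ≤ 1) ∧ ∑ i, x i = 1

/-- An `α`-stretch correlated sampling algorithm for the probability simplex `Δ_n` on the
probability space `(Ω, μ)`: (P1) the output is always a singleton, (P2) marginals,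
(P3) stretch. -/
def SimplexCorrSampling (n : ℕ) (α : ℝ) {Ω : Type}
    [MeasurableSpace Ω] (μ : Measure Ω)
    (A : Ω → (Fin n → ℝ) → Finset (Fin n)) : Prop :=
  (∀ ω x, memSimplex n x → (A ω x).card = 1) ∧
  (∀ x, memSimplex n x → ∀ i : Fin n,
    MeasurableSet {ω | i ∈ A ω x} ∧ μ {ω | i ∈ A ω x} = ENNReal.ofReal (x i)) ∧
  (∀ x y, memSimplex n x → memSimplex n y →
    ∫⁻ ω, ((symmDiff (A ω x) (A ω y)).card : ℝ≥0∞) ∂μ ≤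
      ENNReal.ofReal (α * ∑ i, |x i - y i|))

/-! Exponential race. With `ω₁, …, ωₙ` i.i.d. standard exponentials, the index minimising
`ωᵢ / xᵢ` over the support of `x` is `i` with probability `xᵢ`, since `ωᵢ / xᵢ` is exponential of
rate `xᵢ`. Conditioning on `ωᵢ`, the event `∀ j ≠ i, ωⱼ > cⱼ ωᵢ` has probability
`E[exp (-(∑ cⱼ) ωᵢ)] = 1 / (1 + ∑_{j ≠ i} cⱼ)`; with `cⱼ = max (xⱼ, yⱼ) / min (xᵢ, yᵢ)` it forces `i`
to win for both `x` and `y`, so `x` and `y` select the same index with probability at least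
`∑ min (xᵢ, yᵢ) / ∑ max (xᵢ, yᵢ) ≥ 1 - ∑ |xᵢ - yᵢ|`. Each disagreement costs `2` in
`|A(x) △ A(y)|`. -/

open ProbabilityTheory Real Set Finset

lemma expMeasure_Iio_zero (r : ℝ) : expMeasure r (Iio 0) = 0 := by
  rw [expMeasure, gammaMeasure, withDensity_apply _ measurableSet_Iio]
  exact lintegral_exponentialPDF_of_nonpos le_rfl

lemma ae_nonneg_expMeasure (r : ℝ) : ∀ᵐ t ∂expMeasure r, 0 ≤ t := by
  filter_upwards [measure_eq_zero_iff_ae_notMem.1 (expMeasure_Iio_zero r)] with t ht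
  exact not_lt.1 ht

lemma expMeasure_Ioi {r a : ℝ} (hr : 0 < r) (ha : 0 ≤ a) :
    expMeasure r (Ioi a) = ENNReal.ofReal (exp (-(r * a))) := by
  have := isProbabilityMeasure_expMeasure hr
  have hexp : exp (-(r * a)) ≤ 1 := exp_le_one_iff.2 (by nlinarith)
  rw [← compl_Iic, prob_compl_eq_one_sub measurableSet_Iic, ← ofReal_cdf, cdf_expMeasure_eq hr,
    if_pos ha, ← ENNReal.ofReal_one, ← ENNReal.ofReal_sub _ (by linarith), sub_sub_cancel]

lemma lintegral_exp_neg_mul_expMeasure {r C : ℝ} (hr : 0 < r) (hrC : 0 < r + C) :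
    ∫⁻ t, ENNReal.ofReal (exp (-(C * t))) ∂expMeasure r = ENNReal.ofReal (r / (r + C)) := by
  have hpdf : ∀ t, exponentialPDF r t * ENNReal.ofReal (exp (-(C * t)))
      = ENNReal.ofReal (r / (r + C)) * exponentialPDF (r + C) t := by
    intro t
    rcases lt_or_ge t 0 with ht | ht
    · simp [exponentialPDF_of_neg ht]
    · rw [exponentialPDF_of_nonneg ht, exponentialPDF_of_nonneg ht,
        ← ENNReal.ofReal_mul (by positivity), ← ENNReal.ofReal_mul (by positivity)]
      congr 1
      field_simp
      rw [← exp_add]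
      ring_nf
  have hmeas (s : ℝ) : Measurable (exponentialPDF s) :=
    (measurable_exponentialPDFReal s).ennreal_ofReal
  change ∫⁻ t, _ ∂volume.withDensity (exponentialPDF r) = _
  rw [lintegral_withDensity_eq_lintegral_mul _ (hmeas r) (by fun_prop)]
  simp_rw [Pi.mul_apply, hpdf]
  rw [lintegral_const_mul _ (hmeas _), lintegral_exponentialPDF_eq_one hrC, mul_one]

instance : IsProbabilityMeasure (expMeasure 1) := isProbabilityMeasure_expMeasure one_pos

noncomputable def expProduct (n : ℕ) : Measure (Fin n → ℝ) := Measure.pi fun _ => expMeasure 1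

instance (n : ℕ) : IsProbabilityMeasure (expProduct n) := by
  unfold expProduct; infer_instance

lemma expProduct_race {n : ℕ} (i : Fin n) {c : Fin n → ℝ} (hc : ∀ j, 0 ≤ c j) :
    expProduct n {ω | 0 ≤ ω i ∧ ∀ j ≠ i, c j * ω i < ω j}
      = ENNReal.ofReal (1 / (1 + ∑ j ∈ univ.erase i, c j)) := by
  obtain ⟨m, rfl⟩ := Nat.exists_eq_add_one_of_ne_zero i.pos.ne'
  set C := ∑ k, c (i.succAbove k)
  have hC : ∑ j ∈ univ.erase i, c j = C := by
    rw [← add_right_inj (c i), add_sum_erase _ _ (mem_univ i), Fin.sum_univ_succAbove c i]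
  set B : Set (ℝ × (Fin m → ℝ)) := {p | 0 ≤ p.1 ∧ ∀ k, c (i.succAbove k) * p.1 < p.2 k}
  have hB : MeasurableSet B := by unfold B; measurability
  have hpre : MeasurableEquiv.piFinSuccAbove (fun _ => ℝ) i ⁻¹' B
      = {ω | 0 ≤ ω i ∧ ∀ j ≠ i, c j * ω i < ω j} := by
    ext ω
    simp [B, Fin.forall_iff_succAbove i, MeasurableEquiv.piFinSuccAbove_apply, Fin.removeNth_apply]
  have hslice : ∀ t, 0 ≤ t → (Measure.pi fun _ => expMeasure 1) (Prod.mk t ⁻¹' B)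
      = ENNReal.ofReal (exp (-(C * t))) := by
    intro t ht
    have : Prod.mk t ⁻¹' B = Set.pi univ fun k => Ioi (c (i.succAbove k) * t) := by
      ext v; simp [B, ht]
    rw [this, Measure.pi_pi]
    simp_rw [expMeasure_Ioi one_pos (mul_nonneg (hc _) ht), one_mul]
    rw [← ENNReal.ofReal_prod_of_nonneg fun _ _ => (exp_pos _).le, ← exp_sum, sum_neg_distrib,
      ← sum_mul]
  rw [← hpre, expProduct, (measurePreserving_piFinSuccAbove _ i).measure_preimage
    hB.nullMeasurableSet, Measure.prod_apply hB, hC]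
  rw [lintegral_congr_ae (by filter_upwards [ae_nonneg_expMeasure 1] with t ht using hslice t ht),
    lintegral_exp_neg_mul_expMeasure one_pos
    (add_pos_of_pos_of_nonneg one_pos (sum_nonneg fun k _ => hc _))]

lemma ENNReal.eq_of_forall_le_of_sum_le {ι : Type*} {s : Finset ι} {f g : ι → ℝ≥0∞}
    (hfin : ∑ i ∈ s, f i ≠ ∞) (hle : ∀ i ∈ s, f i ≤ g i) (hsum : ∑ i ∈ s, g i ≤ ∑ i ∈ s, f i)
    {i : ι} (hi : i ∈ s) : f i = g i := by
  classical
  refine le_antisymm (hle i hi) ?_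
  have hrest : ∑ j ∈ s.erase i, f j ≠ ∞ :=
    ne_top_of_le_ne_top hfin (sum_le_sum_of_subset (erase_subset i s))
  rw [← ENNReal.add_le_add_iff_right hrest]
  calc g i + ∑ j ∈ s.erase i, f j ≤ g i + ∑ j ∈ s.erase i, g j :=
        by gcongr with j hj; exact hle j (mem_of_mem_erase hj)
    _ ≤ f i + ∑ j ∈ s.erase i, f j := by rwa [add_sum_erase _ _ hi, add_sum_erase _ _ hi]

lemma card_symmDiff_singleton {α : Type*} [DecidableEq α] (a b : α) :
    #(symmDiff {a} {b}) = if a = b then 0 else 2 := by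
  split_ifs with h
  · simp [h]
  · rw [symmDiff_eq_union (disjoint_singleton.2 h), ← Finset.insert_eq, card_pair h]

lemma one_sub_sum_min_div_sum_max_le {ι : Type*} [Fintype ι] {x y : ι → ℝ}
    (hx : ∑ i, x i = 1) :
    1 - (∑ i, min (x i) (y i)) / ∑ i, max (x i) (y i) ≤ ∑ i, |x i - y i| := by
  have hM : 1 ≤ ∑ i, max (x i) (y i) := hx ▸ sum_le_sum fun i _ => le_max_left _ _
  have hd : ∑ i, |x i - y i| = ∑ i, max (x i) (y i) - ∑ i, min (x i) (y i) := by
    simp_rw [← sum_sub_distrib, max_sub_min_eq_abs, abs_sub_comm]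
  rw [hd, one_sub_div (by positivity)]
  exact div_le_self (hd ▸ sum_nonneg fun i _ => abs_nonneg _) hM

section Race

variable {n : ℕ}

lemma memSimplex.exists_pos {x : Fin n → ℝ} (hx : memSimplex n x) : ∃ i, 0 < x i := by
  by_contra! h
  linarith [hx.2, (Finset.sum_nonpos fun i _ => h i : ∑ i, x i ≤ 0)]

-- The minimisers of `ω i / x i` over the support of `x`, with the ratios cross-multiplied.
open scoped Classical in
noncomputable def raceLeaders (x ω : Fin n → ℝ) : Finset (Fin n) :=
  {i | 0 < x i ∧ ∀ j, 0 < x j → ω i * x j ≤ ω j * x i}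

noncomputable def raceWinner (i₀ : Fin n) (x ω : Fin n → ℝ) : Fin n :=
  if h : (raceLeaders x ω).Nonempty then (raceLeaders x ω).min' h else i₀

def winsStrictly (x : Fin n → ℝ) (i : Fin n) : Set (Fin n → ℝ) :=
  {ω | ∀ j ≠ i, x j * ω i < x i * ω j}

lemma mem_raceLeaders {x ω : Fin n → ℝ} {i : Fin n} :
    i ∈ raceLeaders x ω ↔ 0 < x i ∧ ∀ j, 0 < x j → ω i * x j ≤ ω j * x i := by
  simp [raceLeaders]

lemma raceLeaders_nonempty {x : Fin n → ℝ} (hx : ∃ i, 0 < x i) (ω : Fin n → ℝ) :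
    (raceLeaders x ω).Nonempty := by
  classical
  obtain ⟨i, hi, hmin⟩ := exists_min_image {i | 0 < x i} (fun i => ω i / x i)
    (by simpa [Finset.Nonempty] using hx)
  refine ⟨i, mem_raceLeaders.2 ⟨by simpa using hi, fun j hj => ?_⟩⟩
  simpa [div_le_div_iff₀ (by simpa using hi : 0 < x i) hj] using hmin j (by simpa using hj)

lemma raceWinner_eq_iff {x : Fin n → ℝ} (hx : ∃ i, 0 < x i) (i₀ : Fin n) (ω : Fin n → ℝ)
    (i : Fin n) :
    raceWinner i₀ x ω = i ↔ i ∈ raceLeaders x ω ∧ ∀ k ∈ raceLeaders x ω, i ≤ k := by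
  rw [raceWinner, dif_pos (raceLeaders_nonempty hx ω), min'_eq_iff]

lemma measurableSet_raceWinner_eq {x : Fin n → ℝ} (hx : ∃ i, 0 < x i) (i₀ i : Fin n) :
    MeasurableSet {ω | raceWinner i₀ x ω = i} := by
  simp_rw [raceWinner_eq_iff hx, mem_raceLeaders]
  measurability

lemma measurableSet_winsStrictly (x : Fin n → ℝ) (i : Fin n) :
    MeasurableSet (winsStrictly x i) := by
  unfold winsStrictly; measurability

lemma disjoint_winsStrictly (x : Fin n → ℝ) {i k : Fin n} (hik : i ≠ k) :
    Disjoint (winsStrictly x i) (winsStrictly x k) :=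
  Set.disjoint_left.2 fun _ hi hk => (hi k hik.symm).not_gt (hk i hik)

lemma raceWinner_eq_of_mem_winsStrictly {x ω : Fin n → ℝ} {i : Fin n} (hi : 0 < x i)
    (hω : ω ∈ winsStrictly x i) (i₀ : Fin n) : raceWinner i₀ x ω = i := by
  have hlead : ∀ k ∈ raceLeaders x ω, k = i := by
    intro k hk
    by_contra hki
    have := (mem_raceLeaders.1 hk).2 i hi
    linarith [hω k hki]
  have hmem : i ∈ raceLeaders x ω := by
    refine mem_raceLeaders.2 ⟨hi, fun j _ => ?_⟩
    rcases eq_or_ne j i with rfl | hji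
    · exact le_rfl
    · linarith [hω j hji]
  exact (raceWinner_eq_iff ⟨i, hi⟩ i₀ ω i).2 ⟨hmem, fun k hk => (hlead k hk).ge⟩

lemma race_subset_winsStrictly {x c : Fin n → ℝ} {i : Fin n} (hxi : 0 < x i)
    (hc : ∀ j ≠ i, x j ≤ c j * x i) :
    {ω | 0 ≤ ω i ∧ ∀ j ≠ i, c j * ω i < ω j} ⊆ winsStrictly x i := by
  rintro ω ⟨hωi, hω⟩ j hj
  calc x j * ω i ≤ c j * x i * ω i := mul_le_mul_of_nonneg_right (hc j hj) hωi
    _ = x i * (c j * ω i) := by ring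
    _ < x i * ω j := mul_lt_mul_of_pos_left (hω j hj) hxi

lemma ofReal_min_div_sum_max_le_expProduct_inter {x y : Fin n → ℝ} (hx : ∀ j, 0 ≤ x j)
    (hy : ∀ j, 0 ≤ y j) {i : Fin n} (hxi : 0 < x i) (hyi : 0 < y i) :
    ENNReal.ofReal (min (x i) (y i) / ∑ j, max (x j) (y j))
      ≤ expProduct n (winsStrictly x i ∩ winsStrictly y i) := by
  set m := min (x i) (y i)
  have hm : 0 < m := lt_min hxi hyi
  -- `c j` dominates both `x j / x i` and `y j / y i`.
  set c : Fin n → ℝ := fun j => max (x j) (y j) / m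
  have hc : ∀ j, 0 ≤ c j := fun j => div_nonneg (le_max_of_le_left (hx j)) hm.le
  have hdom : ∀ z : Fin n → ℝ, (∀ j, 0 ≤ z j) → (∀ j, z j ≤ max (x j) (y j)) → m ≤ z i →
      ∀ j ≠ i, z j ≤ c j * z i := by
    intro z hz hzmax hzi j _
    rw [div_mul_eq_mul_div, le_div_iff₀ hm]
    exact mul_le_mul (hzmax j) hzi hm.le ((hz j).trans (hzmax j))
  have hM : m * (1 + ∑ j ∈ univ.erase i, c j) ≤ ∑ j, max (x j) (y j) := by
    rw [mul_add, mul_one, mul_sum, ← add_sum_erase _ _ (mem_univ i)]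
    simp_rw [c, mul_div_cancel₀ _ hm.ne']
    gcongr
    exact min_le_max
  calc ENNReal.ofReal (m / ∑ j, max (x j) (y j))
      ≤ ENNReal.ofReal (1 / (1 + ∑ j ∈ univ.erase i, c j)) := by
        refine ENNReal.ofReal_le_ofReal ?_
        have hone : 1 ≤ 1 + ∑ j ∈ univ.erase i, c j :=
          le_add_of_nonneg_right (sum_nonneg fun j _ => hc j)
        rw [div_le_div_iff₀ (hm.trans_le ((le_mul_of_one_le_right hm.le hone).trans hM))
          (one_pos.trans_le hone), one_mul]
        exact hM
    _ = expProduct n {ω | 0 ≤ ω i ∧ ∀ j ≠ i, c j * ω i < ω j} := (expProduct_race i hc).symm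
    _ ≤ expProduct n (winsStrictly x i ∩ winsStrictly y i) :=
        measure_mono (subset_inter
          (race_subset_winsStrictly hxi (hdom x hx (fun j => le_max_left _ _) (min_le_left _ _)))
          (race_subset_winsStrictly hyi (hdom y hy (fun j => le_max_right _ _) (min_le_right _ _))))

lemma expProduct_raceWinner_eq {x : Fin n → ℝ} (hx : memSimplex n x) (i₀ i : Fin n) :
    expProduct n {ω | raceWinner i₀ x ω = i} = ENNReal.ofReal (x i) := by
  have hlower : ∀ i, ENNReal.ofReal (x i) ≤ expProduct n {ω | raceWinner i₀ x ω = i} := by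
    intro i
    rcases (hx.1 i).1.eq_or_lt with hxi | hxi
    · simp [← hxi]
    · calc ENNReal.ofReal (x i) = ENNReal.ofReal (min (x i) (x i) / ∑ j, max (x j) (x j)) := by
            simp [hx.2]
        _ ≤ expProduct n (winsStrictly x i ∩ winsStrictly x i) :=
            ofReal_min_div_sum_max_le_expProduct_inter (fun j => (hx.1 j).1)
              (fun j => (hx.1 j).1) hxi hxi
        _ ≤ _ := measure_mono fun ω hω => raceWinner_eq_of_mem_winsStrictly hxi hω.1 i₀
  have hsum : ∑ i, expProduct n {ω | raceWinner i₀ x ω = i} = ∑ i, ENNReal.ofReal (x i) := by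
    rw [← ENNReal.ofReal_sum_of_nonneg fun i _ => (hx.1 i).1, hx.2, ENNReal.ofReal_one]
    exact (sum_measure_preimage_singleton univ fun i _ =>
      measurableSet_raceWinner_eq hx.exists_pos i₀ i).trans (by simp)
  exact (ENNReal.eq_of_forall_le_of_sum_le (by simp) (fun i _ => hlower i) hsum.le
    (mem_univ i)).symm

lemma expProduct_raceWinner_ne_le {x y : Fin n → ℝ} (hx : memSimplex n x)
    (hy : memSimplex n y) (i₀ : Fin n) :
    expProduct n {ω | raceWinner i₀ x ω ≠ raceWinner i₀ y ω}
      ≤ ENNReal.ofReal (∑ i, |x i - y i|) := by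
  classical
  have hmin : ∀ i, 0 ≤ min (x i) (y i) := fun i => le_min (hx.1 i).1 (hy.1 i).1
  have hM : 0 ≤ ∑ i, max (x i) (y i) := sum_nonneg fun i _ => le_max_of_le_left (hx.1 i).1
  set K : Finset (Fin n) := {i | 0 < x i ∧ 0 < y i}
  set G := ⋃ i ∈ K, winsStrictly x i ∩ winsStrictly y i
  have hmeas : ∀ i ∈ K, MeasurableSet (winsStrictly x i ∩ winsStrictly y i) :=
    fun i _ => (measurableSet_winsStrictly x i).inter (measurableSet_winsStrictly y i)
  have hsub : {ω | raceWinner i₀ x ω ≠ raceWinner i₀ y ω} ⊆ Gᶜ := by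
    intro ω hne hωG
    obtain ⟨i, hi, hωx, hωy⟩ := mem_iUnion₂.1 hωG
    obtain ⟨hxi, hyi⟩ := (mem_filter.1 hi).2
    exact hne ((raceWinner_eq_of_mem_winsStrictly hxi hωx i₀).trans
      (raceWinner_eq_of_mem_winsStrictly hyi hωy i₀).symm)
  have hagree : ENNReal.ofReal ((∑ i, min (x i) (y i)) / ∑ i, max (x i) (y i))
      ≤ expProduct n G := by
    rw [measure_biUnion_finset (fun i _ j _ hij => (disjoint_winsStrictly x hij).mono
      inter_subset_left inter_subset_left) hmeas]
    calc ENNReal.ofReal ((∑ i, min (x i) (y i)) / ∑ i, max (x i) (y i))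
        = ∑ i ∈ K, ENNReal.ofReal (min (x i) (y i) / ∑ j, max (x j) (y j)) := by
          rw [← ENNReal.ofReal_sum_of_nonneg fun i _ => div_nonneg (hmin i) hM, ← sum_div,
            sum_filter_of_ne fun i _ hi => lt_min_iff.1 ((hmin i).lt_of_ne' hi)]
      _ ≤ _ := sum_le_sum fun i hi => ofReal_min_div_sum_max_le_expProduct_inter
          (fun j => (hx.1 j).1) (fun j => (hy.1 j).1) (mem_filter.1 hi).2.1 (mem_filter.1 hi).2.2
  calc expProduct n {ω | raceWinner i₀ x ω ≠ raceWinner i₀ y ω} ≤ expProduct n Gᶜ :=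
        measure_mono hsub
    _ = 1 - expProduct n G := prob_compl_eq_one_sub (K.measurableSet_biUnion hmeas)
    _ ≤ 1 - ENNReal.ofReal ((∑ i, min (x i) (y i)) / ∑ i, max (x i) (y i)) := by gcongr
    _ = ENNReal.ofReal (1 - (∑ i, min (x i) (y i)) / ∑ i, max (x i) (y i)) := by
        rw [ENNReal.ofReal_sub _ (div_nonneg (sum_nonneg fun i _ => hmin i) hM),
          ENNReal.ofReal_one]
    _ ≤ ENNReal.ofReal (∑ i, |x i - y i|) :=
        ENNReal.ofReal_le_ofReal (one_sub_sum_min_div_sum_max_le hx.2)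

lemma lintegral_card_symmDiff_raceWinner_le {x y : Fin n → ℝ} (hx : memSimplex n x)
    (hy : memSimplex n y) (i₀ : Fin n) :
    ∫⁻ ω, (#(symmDiff {raceWinner i₀ x ω} {raceWinner i₀ y ω}) : ℝ≥0∞) ∂expProduct n
      ≤ ENNReal.ofReal (2 * ∑ i, |x i - y i|) :=
  calc _ ≤ ∫⁻ ω, {ω | raceWinner i₀ x ω ≠ raceWinner i₀ y ω}.indicator (fun _ => 2) ω
          ∂expProduct n := by
        refine lintegral_mono fun ω => ?_
        rw [card_symmDiff_singleton]
        split_ifs with h <;> simp [h]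
    _ ≤ 2 * expProduct n {ω | raceWinner i₀ x ω ≠ raceWinner i₀ y ω} :=
        lintegral_indicator_const_le _ _
    _ ≤ 2 * ENNReal.ofReal (∑ i, |x i - y i|) := by
        gcongr
        exact expProduct_raceWinner_ne_le hx hy i₀
    _ = ENNReal.ofReal (2 * ∑ i, |x i - y i|) := by
        rw [ENNReal.ofReal_mul zero_le_two, ENNReal.ofReal_ofNat]

end Race

/-- For every `n ≥ 1` there exists a `2`-stretch correlated sampling algorithm for the
probability simplex `Δ_n`. -/
theorem statement1 (n : ℕ) (hn : 1 ≤ n) :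
    ∃ (Ω : Type) (mΩ : MeasurableSpace Ω) (μ : @Measure Ω mΩ)
      (A : Ω → (Fin n → ℝ) → Finset (Fin n)),
      @IsProbabilityMeasure Ω mΩ μ ∧
      @SimplexCorrSampling n 2 Ω mΩ μ A := by
  let i₀ : Fin n := ⟨0, hn⟩
  refine ⟨Fin n → ℝ, inferInstance, expProduct n, fun ω x => {raceWinner i₀ x ω}, inferInstance,
    fun ω x _ => card_singleton _, fun x hx i => ?_, fun x y hx hy => ?_⟩
  · simp only [Finset.mem_singleton, eq_comm (a := i)]
    exact ⟨measurableSet_raceWinner_eq hx.exists_pos i₀ i, expProduct_raceWinner_eq hx i₀ i⟩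
  · exact lintegral_card_symmDiff_raceWinner_le hx hy i₀
end

section
/- For every integer n ≥ 1 there exists a 3-stretch correlated sampling algorithm for Δ_{n,1} = {x ∈ [0,1]^n : Σ_i x_i ≤ 1}. -/
open MeasureTheory
open scoped ENNReal

/-- `x ∈ Δ_{n,k}`: all coordinates in `[0,1]` and the coordinate sum is at most `k`. -/
def memDelta (n k : ℕ) (x : Fin n → ℝ) : Prop :=
  (∀ i, 0 ≤ x i ∧ x i ≤ 1) ∧ ∑ i, x i ≤ (k : ℝ)

/-- An `α`-stretch correlated sampling algorithm for `Δ_{n,k}` on the probability space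
`(Ω, μ)`: (P1) cardinality, (P2) marginals, (P3) stretch. -/
def CorrSampling (n k : ℕ) (α : ℝ) {Ω : Type}
    [MeasurableSpace Ω] (μ : Measure Ω)
    (A : Ω → (Fin n → ℝ) → Finset (Fin n)) : Prop :=
  (∀ ω x, memDelta n k x →
    (A ω x).card = ⌊∑ i, x i⌋₊ ∨ (A ω x).card = ⌈∑ i, x i⌉₊) ∧
  (∀ x, memDelta n k x → ∀ i : Fin n,
    MeasurableSet {ω | i ∈ A ω x} ∧ μ {ω | i ∈ A ω x} = ENNReal.ofReal (x i)) ∧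
  (∀ x y, memDelta n k x → memDelta n k y →
    ∫⁻ ω, ((symmDiff (A ω x) (A ω y)).card : ℝ≥0∞) ∂μ ≤
      ENNReal.ofReal (α * ∑ i, |x i - y i|))

/-!
Exponential race. Append a slack coordinate `1 - ∑ x` to `x`, giving a probability vector `p`
on `n + 1` points, draw independent standard exponential clocks `ω₀, …, ωₙ` and let the
coordinate minimising `ωⱼ / pⱼ` win; output it unless it is the slack coordinate. Coordinate `i`
wins with probability `pᵢ`. For two inputs `p, q` the clocks on which `i` wins for both contain
the cone `{ωⱼ > ωᵢ · max(pⱼ, qⱼ) / min(pᵢ, qᵢ)}`, of probability `m / (m + ∑_{j ≠ i} max(pⱼ, qⱼ))`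
with `m = min(pᵢ, qᵢ)`. This bounds the probability that `i` is output for exactly one input by
`|pᵢ - qᵢ| + m ‖p - q‖₁`; summing over `i`, with `∑ᵢ m ≤ 1` and `‖p - q‖₁ ≤ 2 ‖x - y‖₁`,
gives the stretch `3`.
-/

open ProbabilityTheory Set Real
open scoped symmDiff

lemma measureReal_symmDiff_eq_sub_two_mul_inter {α : Type*} [MeasurableSpace α]
    {μ : Measure α} [IsFiniteMeasure μ] {s t : Set α} (hs : MeasurableSet s)
    (ht : MeasurableSet t) :
    μ.real (s ∆ t) = μ.real s + μ.real t - 2 * μ.real (s ∩ t) := by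
  rw [symmDiff_eq_sup_sdiff_inf]
  change μ.real ((s ∪ t) \ (s ∩ t)) = _
  rw [measureReal_sdiff (inter_subset_left.trans subset_union_left) (hs.inter ht),
    ← measureReal_union_add_inter ht]
  ring

lemma lintegral_card_eq_sum_measure {Ω ι : Type*} [MeasurableSpace Ω] [Fintype ι]
    (μ : Measure Ω) {F : Ω → Finset ι} (hF : ∀ i, MeasurableSet {ω | i ∈ F ω}) :
    ∫⁻ ω, ((F ω).card : ℝ≥0∞) ∂μ = ∑ i, μ {ω | i ∈ F ω} := by
  have hcard : ∀ ω, ((F ω).card : ℝ≥0∞) = ∑ i, {ω | i ∈ F ω}.indicator 1 ω := fun ω => by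
    classical
    simp [indicator_apply]
  simp_rw [hcard]
  rw [lintegral_finsetSum _ fun i _ => measurable_one.indicator (hF i)]
  simp_rw [lintegral_indicator_one (hF _)]

lemma two_mul_sub_two_mul_div_le {m W T : ℝ} (hm : 0 ≤ m) (hW : 0 ≤ W)
    (h : 2 * (m + W - 1) ≤ T) : 2 * m - 2 * (m / (m + W)) ≤ m * T := by
  rcases hm.eq_or_lt with rfl | hm
  · simp
  have hw : 0 < m + W := by linarith
  have key : m - m / (m + W) ≤ m * (m + W - 1) := by
    rw [sub_le_iff_le_add, ← sub_le_iff_le_add', le_div_iff₀ hw]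
    nlinarith [sq_nonneg (m + W - 1)]
  nlinarith

instance inst_s3 : IsProbabilityMeasure (expMeasure 1) := isProbabilityMeasure_expMeasure one_pos

lemma expMeasure_one_eq_withDensity : expMeasure 1 = volume.withDensity (exponentialPDF 1) := rfl

lemma measurable_exponentialPDF (r : ℝ) : Measurable (exponentialPDF r) :=
  (measurable_exponentialPDFReal r).ennreal_ofReal

lemma ae_nonneg_expMeasure_one : ∀ᵐ t ∂expMeasure 1, 0 ≤ t := by
  rw [expMeasure_one_eq_withDensity, ae_withDensity_iff (measurable_exponentialPDF 1)]
  filter_upwards with t ht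
  by_contra h
  exact ht (exponentialPDF_of_neg (not_le.1 h))

lemma expMeasure_one_Ioi {t : ℝ} (ht : 0 ≤ t) :
    expMeasure 1 (Ioi t) = ENNReal.ofReal (exp (-t)) := by
  rw [← compl_Iic, prob_compl_eq_one_sub measurableSet_Iic, ← ofReal_cdf,
    cdf_expMeasure_eq one_pos, if_pos ht, one_mul, ← ENNReal.ofReal_one,
    ← ENNReal.ofReal_sub _ (sub_nonneg.2 (exp_le_one_iff.2 (by linarith))), sub_sub_cancel]

lemma lintegral_exp_neg_mul_expMeasure_one {a : ℝ} (ha : 0 ≤ a) :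
    ∫⁻ t, ENNReal.ofReal (exp (-(a * t))) ∂expMeasure 1 = ENNReal.ofReal (1 + a)⁻¹ := by
  have h1a : 0 < 1 + a := by linarith
  have hpdf : ∀ t, exponentialPDF 1 t * ENNReal.ofReal (exp (-(a * t)))
      = ENNReal.ofReal (1 + a)⁻¹ * exponentialPDF (1 + a) t := by
    intro t
    simp only [exponentialPDF_eq, ← ENNReal.ofReal_mul (by positivity : (0:ℝ) ≤ (1 + a)⁻¹)]
    rw [← ENNReal.ofReal_mul (by split_ifs <;> positivity)]
    congr 1
    split_ifs
    · rw [inv_mul_cancel_left₀ h1a.ne', one_mul, ← exp_add]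
      ring_nf
    · simp
  rw [expMeasure_one_eq_withDensity,
    lintegral_withDensity_eq_lintegral_mul _ (measurable_exponentialPDF 1) (by fun_prop)]
  simp only [Pi.mul_apply, hpdf]
  rw [lintegral_const_mul _ (measurable_exponentialPDF _), lintegral_exponentialPDF_eq_one h1a,
    mul_one]

lemma lintegral_prod_expMeasure_one_Ioi {ι : Type*} [Fintype ι] {c : ι → ℝ}
    (hc : ∀ j, 0 ≤ c j) :
    ∫⁻ t, ∏ j, expMeasure 1 (Ioi (c j * t)) ∂expMeasure 1 = ENNReal.ofReal (1 + ∑ j, c j)⁻¹ := by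
  rw [← lintegral_exp_neg_mul_expMeasure_one (Finset.sum_nonneg fun j _ => hc j)]
  refine lintegral_congr_ae (ae_nonneg_expMeasure_one.mono fun t ht => ?_)
  simp only [expMeasure_one_Ioi (mul_nonneg (hc _) ht), Finset.sum_mul, ← Finset.sum_neg_distrib,
    exp_sum, ENNReal.ofReal_prod_of_nonneg fun j _ => (exp_pos _).le]

lemma measurableSet_cone {ι : Type*} [Countable ι] (c : ι → ℝ) :
    MeasurableSet {p : ℝ × (ι → ℝ) | ∀ j, c j * p.1 < p.2 j} := by
  simp only [ofPred_forall]
  exact MeasurableSet.iInter fun j => measurableSet_lt (by fun_prop) (by fun_prop)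

lemma prod_pi_expMeasure_one_cone {ι : Type*} [Fintype ι] {c : ι → ℝ} (hc : ∀ j, 0 ≤ c j) :
    ((expMeasure 1).prod (Measure.pi fun _ : ι => expMeasure 1))
      {p | ∀ j, c j * p.1 < p.2 j} = ENNReal.ofReal (1 + ∑ j, c j)⁻¹ := by
  rw [Measure.prod_apply (measurableSet_cone c), ← lintegral_prod_expMeasure_one_Ioi hc]
  congr! with t
  rw [← Measure.pi_pi]
  congr 1
  ext ω
  simp

noncomputable def expClocks (N : ℕ) : Measure (Fin (N + 1) → ℝ) :=
  Measure.pi fun _ => expMeasure 1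

instance (N : ℕ) : IsProbabilityMeasure (expClocks N) := by
  unfold expClocks
  infer_instance

lemma ae_expClocks_nonneg {N : ℕ} (i : Fin (N + 1)) : ∀ᵐ ω ∂expClocks N, 0 ≤ ω i :=
  Measure.tendsto_eval_ae_ae.eventually ae_nonneg_expMeasure_one

lemma expClocks_cone {N : ℕ} (i : Fin (N + 1)) {c : Fin (N + 1) → ℝ} (hc : ∀ j, 0 ≤ c j) :
    expClocks N {ω | ∀ j ≠ i, c j * ω i < ω j}
      = ENNReal.ofReal (1 + ∑ j ∈ Finset.univ.erase i, c j)⁻¹ := by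
  have hpres := measurePreserving_piFinSuccAbove (fun _ : Fin (N + 1) => expMeasure 1) i
  have hset : {ω : Fin (N + 1) → ℝ | ∀ j ≠ i, c j * ω i < ω j}
      = MeasurableEquiv.piFinSuccAbove (fun _ => ℝ) i ⁻¹'
          {p | ∀ k, c (i.succAbove k) * p.1 < p.2 k} := by
    ext ω
    simp [Fin.forall_iff_succAbove i, Fin.removeNth]
  rw [expClocks, hset, hpres.measure_preimage (measurableSet_cone _).nullMeasurableSet,
    prod_pi_expMeasure_one_cone fun k => hc _, Finset.sum_erase_eq_sub (Finset.mem_univ i),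
    Fin.sum_univ_succAbove c i, add_sub_cancel_left]

section Race

variable {N : ℕ}

/-- Ties count as losses, so the sets `race p i` are pairwise disjoint; when `∑ p = 1` they still
cover almost every clock (`ae_exists_mem_race`). -/
def race (p : Fin (N + 1) → ℝ) (i : Fin (N + 1)) : Set (Fin (N + 1) → ℝ) :=
  {ω | 0 < p i ∧ ∀ j ≠ i, p j * ω i < p i * ω j}

lemma measurableSet_race (p : Fin (N + 1) → ℝ) (i : Fin (N + 1)) :
    MeasurableSet (race p i) := by
  simp only [race, ofPred_and, ofPred_forall]
  exact MeasurableSet.const _ |>.inter <| MeasurableSet.iInter fun j =>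
    MeasurableSet.iInter fun _ => measurableSet_lt (by fun_prop) (by fun_prop)

lemma race_eq_empty {p : Fin (N + 1) → ℝ} {i : Fin (N + 1)} (h : p i ≤ 0) : race p i = ∅ :=
  eq_empty_of_forall_notMem fun _ hω => h.not_gt hω.1

lemma pairwise_disjoint_race (p : Fin (N + 1) → ℝ) :
    Pairwise (Function.onFun Disjoint (race p)) :=
  fun i j hij => disjoint_left.2 fun _ hi hj => (hi.2 j hij.symm).not_gt (hj.2 i hij)

variable {p q : Fin (N + 1) → ℝ}

lemma expClocks_race (hp : ∀ j, 0 ≤ p j) (hp1 : ∑ j, p j = 1) (i : Fin (N + 1)) :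
    expClocks N (race p i) = ENNReal.ofReal (p i) := by
  rcases (hp i).eq_or_lt with hi | hi
  · rw [race_eq_empty hi.ge, ← hi, measure_empty, ENNReal.ofReal_zero]
  have hset : race p i = {ω | ∀ j ≠ i, p j / p i * ω i < ω j} := by
    ext ω
    simp only [race, mem_ofPred_eq, hi, true_and, div_mul_eq_mul_div, div_lt_iff₀ hi,
      mul_comm (ω _)]
  rw [hset, expClocks_cone i fun j => div_nonneg (hp j) hi.le, ← Finset.sum_div,
    Finset.sum_erase_eq_sub (Finset.mem_univ i), hp1]
  congr 1
  field_simp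
  ring

lemma ae_exists_mem_race (hp : ∀ j, 0 ≤ p j) (hp1 : ∑ j, p j = 1) :
    ∀ᵐ ω ∂expClocks N, ∃ i, ω ∈ race p i := by
  have hU : {ω | ∃ i, ω ∈ race p i} = ⋃ i, race p i := by ext; simp
  rw [ae_iff_measure_eq (hU ▸ (MeasurableSet.iUnion (measurableSet_race p)).nullMeasurableSet),
    hU, measure_iUnion (pairwise_disjoint_race p) (measurableSet_race p), tsum_fintype]
  simp [expClocks_race hp hp1, ← ENNReal.ofReal_sum_of_nonneg fun j _ => hp j, hp1]

lemma le_expClocks_race_inter (hp : ∀ j, 0 ≤ p j) (hq : ∀ j, 0 ≤ q j) (i : Fin (N + 1)) :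
    ENNReal.ofReal (min (p i) (q i) /
        (min (p i) (q i) + ∑ j ∈ Finset.univ.erase i, max (p j) (q j)))
      ≤ expClocks N (race p i ∩ race q i) := by
  set m := min (p i) (q i)
  obtain hm | hm : 0 = m ∨ 0 < m := (le_min (hp i) (hq i)).eq_or_lt
  · rw [← hm, zero_div, ENNReal.ofReal_zero]
    exact zero_le
  set c : Fin (N + 1) → ℝ := fun j => max (p j) (q j) / m
  have hc : ∀ j, 0 ≤ c j := fun j => div_nonneg ((hp j).trans (le_max_left _ _)) hm.le
  have hcone : expClocks N {ω | ∀ j ≠ i, c j * ω i < ω j}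
      = ENNReal.ofReal (m / (m + ∑ j ∈ Finset.univ.erase i, max (p j) (q j))) := by
    rw [expClocks_cone i hc, ← Finset.sum_div, one_add_div hm.ne', inv_div]
  rw [← hcone]
  refine measure_mono_ae ((ae_expClocks_nonneg i).mono fun ω hωi hω => ?_)
  have mem_race : ∀ {r : Fin (N + 1) → ℝ}, (∀ j, r j ≤ max (p j) (q j)) → m ≤ r i →
      ω ∈ race r i := fun {r} hr hri => ⟨hm.trans_le hri, fun j hj => by
    have hcj : c j * ω i < ω j := hω j hj
    have hωj : 0 ≤ ω j := (mul_nonneg (hc j) hωi).trans hcj.le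
    calc r j * ω i ≤ max (p j) (q j) * ω i := mul_le_mul_of_nonneg_right (hr j) hωi
      _ = m * (c j * ω i) := by simp only [c]; field_simp
      _ < m * ω j := mul_lt_mul_of_pos_left hcj hm
      _ ≤ r i * ω j := mul_le_mul_of_nonneg_right hri hωj⟩
  exact ⟨mem_race (fun j => le_max_left _ _) (min_le_left _ _),
    mem_race (fun j => le_max_right _ _) (min_le_right _ _)⟩

lemma expClocks_real_race_symmDiff_le (hp : ∀ j, 0 ≤ p j) (hp1 : ∑ j, p j = 1)
    (hq : ∀ j, 0 ≤ q j) (hq1 : ∑ j, q j = 1) (i : Fin (N + 1)) :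
    (expClocks N).real (race p i ∆ race q i)
      ≤ |p i - q i| + min (p i) (q i) * ∑ j, |p j - q j| := by
  set m := min (p i) (q i)
  set W := ∑ j ∈ Finset.univ.erase i, max (p j) (q j)
  have hinter : m / (m + W) ≤ (expClocks N).real (race p i ∩ race q i) :=
    (ENNReal.ofReal_le_iff_le_toReal (measure_ne_top _ _)).1 (le_expClocks_race_inter hp hq i)
  have hpq : p i + q i = 2 * m + |p i - q i| := by
    linarith [min_add_max (p i) (q i), max_sub_min_eq_abs (p i) (q i), abs_sub_comm (p i) (q i)]
  have hW : 2 * (m + W - 1) ≤ ∑ j, |p j - q j| := by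
    have h2max : 2 * W ≤ ∑ j ∈ Finset.univ.erase i, (p j + q j + |p j - q j|) := by
      rw [Finset.mul_sum]
      gcongr with j
      linarith [min_add_max (p j) (q j), max_sub_min_eq_abs (p j) (q j), abs_sub_comm (p j) (q j)]
    simp only [Finset.sum_add_distrib, Finset.sum_erase_eq_sub (Finset.mem_univ i), hp1, hq1]
      at h2max
    linarith [abs_nonneg (p i - q i)]
  rw [measureReal_symmDiff_eq_sub_two_mul_inter (measurableSet_race p i) (measurableSet_race q i),
    measureReal_def, measureReal_def, expClocks_race hp hp1, expClocks_race hq hq1,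
    ENNReal.toReal_ofReal (hp i), ENNReal.toReal_ofReal (hq i), hpq]
  have := two_mul_sub_two_mul_div_le (le_min (hp i) (hq i))
    (Finset.sum_nonneg fun j _ => (hp j).trans (le_max_left _ _)) hW
  linarith

end Race

section Sampler

variable {n : ℕ}

noncomputable def withSlack (x : Fin n → ℝ) : Fin (n + 1) → ℝ := Fin.cons (1 - ∑ i, x i) x

@[simp] lemma withSlack_zero (x : Fin n → ℝ) : withSlack x 0 = 1 - ∑ i, x i := rfl

@[simp] lemma withSlack_succ (x : Fin n → ℝ) (i : Fin n) : withSlack x i.succ = x i := rfl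

lemma sum_withSlack (x : Fin n → ℝ) : ∑ j, withSlack x j = 1 := by
  simp [Fin.sum_univ_succ]

lemma withSlack_nonneg {x : Fin n → ℝ} (hx : memDelta n 1 x) (j : Fin (n + 1)) :
    0 ≤ withSlack x j := by
  cases j using Fin.cases with
  | zero => simpa using hx.2
  | succ i => simpa using (hx.1 i).1

lemma sum_abs_withSlack_sub_le (x y : Fin n → ℝ) :
    ∑ j, |withSlack x j - withSlack y j| ≤ 2 * ∑ i, |x i - y i| := by
  have hslack : |(1 - ∑ i, x i) - (1 - ∑ i, y i)| ≤ ∑ i, |x i - y i| := by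
    rw [sub_sub_sub_cancel_left, abs_sub_comm, ← Finset.sum_sub_distrib]
    exact Finset.abs_sum_le_sum_abs _ _
  rw [Fin.sum_univ_succ]
  simp only [withSlack_zero, withSlack_succ]
  linarith

open scoped Classical in
noncomputable def winners (ω : Fin (n + 1) → ℝ) (x : Fin n → ℝ) : Finset (Fin n) :=
  {i | ω ∈ race (withSlack x) i.succ}

lemma mem_winners {ω : Fin (n + 1) → ℝ} {x : Fin n → ℝ} {i : Fin n} :
    i ∈ winners ω x ↔ ω ∈ race (withSlack x) i.succ := by
  simp [winners]

lemma setOf_mem_winners (x : Fin n → ℝ) (i : Fin n) :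
    {ω | i ∈ winners ω x} = race (withSlack x) i.succ :=
  ext fun _ => mem_winners

lemma card_winners_le_one (ω : Fin (n + 1) → ℝ) (x : Fin n → ℝ) : (winners ω x).card ≤ 1 :=
  Finset.card_le_one.2 fun _ hi _ hj => by_contra fun hij =>
    (pairwise_disjoint_race _ (Fin.succ_injective _ |>.ne hij)).notMem_of_mem_left
      (mem_winners.1 hi) (mem_winners.1 hj)

lemma measurable_winners (x : Fin n → ℝ) : Measurable fun ω => winners ω x :=
  measurable_finset_iff.2 fun i =>
    measurableSet_setOfPred.1 (setOf_mem_winners x i ▸ measurableSet_race _ i.succ)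

/-- When `∑ x = 1` the slack coordinate never wins, so a.s. some `i` does; on the remaining null
set of ties any coordinate with `0 < x i` is output, to keep the cardinality right. -/
noncomputable def sampler (ω : Fin (n + 1) → ℝ) (x : Fin n → ℝ) : Finset (Fin n) :=
  if winners ω x = ∅ ∧ ∑ i, x i = 1 then
    if h : ∃ i, 0 < x i then {h.choose} else ∅
  else winners ω x

lemma measurable_sampler (x : Fin n → ℝ) : Measurable fun ω => sampler ω x :=
  Measurable.ite ((measurable_winners x (measurableSet_singleton ∅)).inter (MeasurableSet.const _))
    measurable_const (measurable_winners x)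

lemma card_sampler {x : Fin n → ℝ} (hx : memDelta n 1 x) (ω : Fin (n + 1) → ℝ) :
    (sampler ω x).card = ⌊∑ i, x i⌋₊ ∨ (sampler ω x).card = ⌈∑ i, x i⌉₊ := by
  have hs1 : ∑ i, x i ≤ 1 := by simpa using hx.2
  unfold sampler
  split_ifs with hfall hpos
  · right
    simp [hfall.2]
  · simp only [not_exists, not_lt] at hpos
    linarith [hfall.2, Finset.sum_nonpos fun i (_ : i ∈ Finset.univ) => hpos i]
  · rcases Nat.le_one_iff_eq_zero_or_eq_one.1 (card_winners_le_one ω x) with h0 | h1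
    · left
      rw [h0, eq_comm, Nat.floor_eq_zero]
      exact hs1.lt_of_ne fun h => hfall ⟨Finset.card_eq_zero.1 h0, h⟩
    · right
      obtain ⟨i, hi⟩ := Finset.card_eq_one.1 h1
      have hxi : 0 < x i := by
        simpa using (mem_winners.1 (hi ▸ Finset.mem_singleton_self i)).1
      have hpos : 0 < ∑ i, x i :=
        hxi.trans_le (Finset.single_le_sum (fun j _ => (hx.1 j).1) (Finset.mem_univ i))
      rw [h1]
      exact (le_antisymm (Nat.one_le_ceil_iff.2 hpos) (Nat.ceil_le.2 (by simpa using hs1)))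

lemma ae_sampler_eq_winners {x : Fin n → ℝ} (hx : memDelta n 1 x) :
    ∀ᵐ ω ∂expClocks n, sampler ω x = winners ω x := by
  by_cases hsum : ∑ i, x i = 1
  · filter_upwards [ae_exists_mem_race (withSlack_nonneg hx) (sum_withSlack x)] with ω ⟨j, hj⟩
    cases j using Fin.cases with
    | zero => exact absurd hj (by simp [race_eq_empty, hsum])
    | succ i => exact if_neg fun ⟨h, _⟩ => Finset.notMem_empty i (h ▸ mem_winners.2 hj)
  · exact ae_of_all _ fun ω => if_neg fun h => hsum h.2

lemma expClocks_mem_sampler {x : Fin n → ℝ} (hx : memDelta n 1 x) (i : Fin n) :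
    expClocks n {ω | i ∈ sampler ω x} = ENNReal.ofReal (x i) := by
  have hae : {ω | i ∈ sampler ω x} =ᵐ[expClocks n] {ω | i ∈ winners ω x} :=
    (ae_sampler_eq_winners hx).mono fun ω hω => congrArg (i ∈ ·) hω
  rw [measure_congr hae, setOf_mem_winners, expClocks_race (withSlack_nonneg hx) (sum_withSlack x),
    withSlack_succ]

lemma setOf_mem_symmDiff_winners (x y : Fin n → ℝ) (i : Fin n) :
    {ω | i ∈ winners ω x ∆ winners ω y}
      = race (withSlack x) i.succ ∆ race (withSlack y) i.succ := by
  ext ω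
  simp [Finset.mem_symmDiff, Set.mem_symmDiff, mem_winners]

lemma expClocks_mem_symmDiff_winners_le {x y : Fin n → ℝ} (hx : memDelta n 1 x)
    (hy : memDelta n 1 y) (i : Fin n) :
    expClocks n {ω | i ∈ winners ω x ∆ winners ω y}
      ≤ ENNReal.ofReal (|x i - y i| +
          min (x i) (y i) * ∑ j, |withSlack x j - withSlack y j|) := by
  have := expClocks_real_race_symmDiff_le (withSlack_nonneg hx) (sum_withSlack x)
    (withSlack_nonneg hy) (sum_withSlack y) i.succ
  rw [setOf_mem_symmDiff_winners, ← ofReal_measureReal]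
  exact ENNReal.ofReal_le_ofReal (by simpa using this)

lemma lintegral_card_symmDiff_sampler_le {x y : Fin n → ℝ} (hx : memDelta n 1 x)
    (hy : memDelta n 1 y) :
    ∫⁻ ω, ((sampler ω x ∆ sampler ω y).card : ℝ≥0∞) ∂expClocks n
      ≤ ENNReal.ofReal (3 * ∑ i, |x i - y i|) := by
  set T := ∑ j, |withSlack x j - withSlack y j|
  have hmin : ∀ i, 0 ≤ min (x i) (y i) := fun i => le_min (hx.1 i).1 (hy.1 i).1
  have hT : 0 ≤ T := Finset.sum_nonneg fun j _ => abs_nonneg _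
  have hsum_min : ∑ i, min (x i) (y i) ≤ 1 :=
    (Finset.sum_le_sum fun i _ => min_le_left _ _).trans (by simpa using hx.2)
  calc ∫⁻ ω, ((sampler ω x ∆ sampler ω y).card : ℝ≥0∞) ∂expClocks n
      = ∫⁻ ω, ((winners ω x ∆ winners ω y).card : ℝ≥0∞) ∂expClocks n := by
        refine lintegral_congr_ae ?_
        filter_upwards [ae_sampler_eq_winners hx, ae_sampler_eq_winners hy] with ω hωx hωy
        rw [hωx, hωy]
    _ = ∑ i, expClocks n {ω | i ∈ winners ω x ∆ winners ω y} :=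
        lintegral_card_eq_sum_measure _ fun i => setOf_mem_symmDiff_winners x y i ▸
          (measurableSet_race _ _).symmDiff (measurableSet_race _ _)
    _ ≤ ∑ i, ENNReal.ofReal (|x i - y i| + min (x i) (y i) * T) :=
        Finset.sum_le_sum fun i _ => expClocks_mem_symmDiff_winners_le hx hy i
    _ = ENNReal.ofReal (∑ i, |x i - y i| + (∑ i, min (x i) (y i)) * T) := by
        rw [← ENNReal.ofReal_sum_of_nonneg fun i _ => add_nonneg (abs_nonneg _)
          (mul_nonneg (hmin i) hT), Finset.sum_add_distrib, Finset.sum_mul]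
    _ ≤ ENNReal.ofReal (3 * ∑ i, |x i - y i|) := by
        refine ENNReal.ofReal_le_ofReal ?_
        nlinarith [mul_le_of_le_one_left hT hsum_min, sum_abs_withSlack_sub_le x y]

end Sampler

theorem statement3_general (n : ℕ) :
    ∃ (Ω : Type) (mΩ : MeasurableSpace Ω) (μ : @Measure Ω mΩ)
      (A : Ω → (Fin n → ℝ) → Finset (Fin n)),
      @IsProbabilityMeasure Ω mΩ μ ∧
      @CorrSampling n 1 3 Ω mΩ μ A :=
  ⟨_, _, expClocks n, sampler, inferInstance, fun ω _ hx => card_sampler hx ω,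
    fun x hx i => ⟨measurable_sampler x (measurableSet_mem_finset i), expClocks_mem_sampler hx i⟩,
    fun _ _ hx hy => lintegral_card_symmDiff_sampler_le hx hy⟩

/-- For every `n ≥ 1` there exists a `3`-stretch correlated sampling algorithm for
`Δ_{n,1}`. -/
theorem statement3 (n : ℕ) (hn : 1 ≤ n) :
    ∃ (Ω : Type) (mΩ : MeasurableSpace Ω) (μ : @Measure Ω mΩ)
      (A : Ω → (Fin n → ℝ) → Finset (Fin n)),
      @IsProbabilityMeasure Ω mΩ μ ∧
      @CorrSampling n 1 3 Ω mΩ μ A :=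
  statement3_general n
end

section
/- Let C > 4 be a real number, k ≥ 2 and n ≥ 2 integers, and let a : ℕ → ℝ be a sequence with a_i ≥ 2 for all i, a_0 ≤ C·log₂ n, and a_i ≤ C·(log₂ k + log₂ a_{i−1}) for all i ≥ 1. Then for every integer i with 0 ≤ i ≤ log*₂ n − 2 one has a_i ≤ C·(log₂^{(i+1)} n + i·log₂(C·k)). -/
/-- Iterated base-2 logarithm: `iterLog 0 x = x` and `iterLog (i+1) x = log₂ (iterLog i x)`. -/
noncomputable def iterLog : ℕ → ℝ → ℝ
  | 0, x => x
  | i + 1, x => Real.logb 2 (iterLog i x)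

/-- `log*₂ x`: the least `i ≥ 0` with `log₂^{(i)} x ≤ 1`. -/
noncomputable def logStar (x : ℝ) : ℕ := sInf {i : ℕ | iterLog i x ≤ 1}

lemma key_logb_add (x t : ℝ) (hx : 2 ≤ x) (ht : 0 ≤ t) :
    Real.logb 2 (x + t) ≤ Real.logb 2 x + t := by
  have hlog2 : (0.69 : ℝ) < Real.log 2 := by
    have := Real.log_two_gt_d9; linarith
  have hexp : 1 + t * Real.log 2 ≤ (2:ℝ) ^ t := by
    rw [Real.rpow_def_of_pos two_pos]
    linarith [Real.add_one_le_exp (Real.log 2 * t)]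
  have hx0 : (0:ℝ) ≤ x := by linarith
  have hxt : x + t ≤ x * 2 ^ t := by
    nlinarith [mul_le_mul_of_nonneg_left hexp hx0, mul_nonneg ht (by linarith : (0:ℝ) ≤ Real.log 2)]
  calc Real.logb 2 (x + t) ≤ Real.logb 2 (x * 2 ^ t) :=
        Real.logb_le_logb_of_le one_lt_two (by linarith) hxt
    _ = Real.logb 2 x + t := by
        rw [Real.logb_mul (by linarith) (by positivity),
          Real.logb_rpow two_pos (by norm_num)]

/-- Let `C > 4`, `k, n ≥ 2`, and let `a` be a sequence with `a_i ≥ 2` for all `i`,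
`a_0 ≤ C·log₂ n`, and `a_i ≤ C·(log₂ k + log₂ a_{i-1})` for all `i ≥ 1`. Then for every
`0 ≤ i ≤ log*₂ n − 2` one has `a_i ≤ C·(log₂^{(i+1)} n + i·log₂(C·k))`. -/
theorem statement6 (C : ℝ) (hC : 4 < C) (k n : ℕ) (hk : 2 ≤ k) (hn : 2 ≤ n)
    (a : ℕ → ℝ) (ha2 : ∀ i, 2 ≤ a i)
    (ha0 : a 0 ≤ C * Real.logb 2 n)
    (harec : ∀ i : ℕ, a (i + 1) ≤ C * (Real.logb 2 k + Real.logb 2 (a i)))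
    (i : ℕ) (hi : (i : ℤ) ≤ (logStar n : ℤ) - 2) :
    a i ≤ C * (iterLog (i + 1) n + i * Real.logb 2 (C * k)) := by
  induction i with
  | zero => simpa [iterLog] using ha0
  | succ i ih =>
    have hi0 : (i : ℤ) ≤ (logStar n : ℤ) - 2 := by omega
    have IH := ih hi0
    have hstar : i + 3 ≤ logStar (n:ℝ) := by omega
    unfold logStar at hstar
    have hnm1 : (i + 1) ∉ {j : ℕ | iterLog j (n:ℝ) ≤ 1} :=
      Nat.notMem_of_lt_sInf (by omega)
    have hnm2 : (i + 2) ∉ {j : ℕ | iterLog j (n:ℝ) ≤ 1} :=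
      Nat.notMem_of_lt_sInf (by omega)
    have hpos : 1 < iterLog (i + 1) (n:ℝ) := lt_of_not_ge hnm1
    have hgt : 1 < iterLog (i + 2) (n:ℝ) := lt_of_not_ge hnm2
    set x := iterLog (i + 1) (n:ℝ) with hxdef
    have hgt' : 1 < Real.logb 2 x := hgt
    have hx2 : 2 < x := by
      have := (Real.lt_logb_iff_rpow_lt one_lt_two (by linarith : (0:ℝ) < x)).mp hgt'
      simpa using this
    have hCk : (1:ℝ) < C * k := by
      have : (2:ℝ) ≤ k := by exact_mod_cast hk
      nlinarith
    have hlogCk : 0 ≤ Real.logb 2 (C * k) := Real.logb_nonneg one_lt_two hCk.le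
    set t := (i : ℝ) * Real.logb 2 (C * k) with htdef
    have ht : 0 ≤ t := mul_nonneg (by positivity) hlogCk
    have hC0 : (0:ℝ) < C := by linarith
    have hai : a i ≤ C * (x + t) := IH
    have hxt0 : (0:ℝ) < x + t := by linarith
    have h1 : Real.logb 2 (a i) ≤ Real.logb 2 (C * (x + t)) :=
      Real.logb_le_logb_of_le one_lt_two (by linarith [ha2 i]) hai
    have h2 : Real.logb 2 (C * (x + t)) = Real.logb 2 C + Real.logb 2 (x + t) :=
      Real.logb_mul (ne_of_gt hC0) (ne_of_gt hxt0)
    have h3 : Real.logb 2 (x + t) ≤ Real.logb 2 x + t := key_logb_add x t hx2.le ht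
    have h4 : Real.logb 2 (a i) ≤ Real.logb 2 C + (Real.logb 2 x + t) := by
      linarith [h1, h2.le, h3]
    have hlogCkeq : Real.logb 2 (C * k) = Real.logb 2 C + Real.logb 2 k := by
      have hk0 : (0:ℝ) < k := by positivity
      exact Real.logb_mul (ne_of_gt hC0) (ne_of_gt hk0)
    have hgoal : iterLog (i + 1 + 1) (n:ℝ) = Real.logb 2 x := rfl
    calc a (i + 1) ≤ C * (Real.logb 2 k + Real.logb 2 (a i)) := harec i
      _ ≤ C * (Real.logb 2 k + (Real.logb 2 C + (Real.logb 2 x + t))) := by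
          apply mul_le_mul_of_nonneg_left _ hC0.le
          linarith
      _ = C * (iterLog (i + 1 + 1) n + (i + 1 : ℕ) * Real.logb 2 (C * k)) := by
          rw [hgoal, htdef, hlogCkeq]
          push_cast
          ring
end

section
/- For every real C > 4 there exists a constant C' > 0 (depending only on C) such that for all integers n ≥ 2, k ≥ 2 and every sequence a : ℕ → ℝ with a_i ≥ 2 for all i, a_0 ≤ 4·log₂ n, and a_{i+1} ≤ C·(log₂ k + log₂ a_i) for all i ≥ 0, there exists an index i ≤ log*₂ n + C'·log₂(2 + log*₂ n) with a_i ≤ C'·log₂ k. -/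
lemma logb2_mono {x y : ℝ} (hx : 0 < x) (hxy : x ≤ y) : Real.logb 2 x ≤ Real.logb 2 y :=
  Real.logb_le_logb_of_le one_lt_two hx hxy

lemma logb2_two : Real.logb 2 2 = 1 := Real.logb_self_eq_one one_lt_two

lemma logb2_le_sub_one {x : ℝ} (hx : 2 ≤ x) : Real.logb 2 x ≤ x - 1 := by
  have h2 : (0:ℝ) < Real.log 2 := Real.log_pos one_lt_two
  have hl2 : (1/2 : ℝ) ≤ Real.log 2 := by
    have := Real.log_two_gt_d9; linarith
  have hx2 : (0:ℝ) < x / 2 := by linarith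
  have key : Real.log (x/2) ≤ x/2 - 1 := Real.log_le_sub_one_of_pos hx2
  have hsplit : Real.log x = Real.log (x/2) + Real.log 2 := by
    rw [← Real.log_mul (by positivity) (by norm_num)]
    ring_nf
  rw [Real.logb, hsplit]
  rw [div_le_iff₀ h2]
  nlinarith [Real.log_nonneg (by linarith : (1:ℝ) ≤ x/2)]

lemma logb2_le_self {x : ℝ} (hx : 1 ≤ x) : Real.logb 2 x ≤ x := by
  rcases le_or_gt 2 x with h | h
  · linarith [logb2_le_sub_one h]
  · have h1 : Real.logb 2 x ≤ Real.logb 2 2 := logb2_mono (by linarith) (by linarith)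
    rw [logb2_two] at h1
    linarith

lemma one_le_logb2 {x : ℝ} (hx : 2 ≤ x) : 1 ≤ Real.logb 2 x := by
  have h1 : Real.logb 2 2 ≤ Real.logb 2 x := logb2_mono (by norm_num) hx
  rwa [logb2_two] at h1

/-- For every real `C > 4` there is a constant `C' > 0` (depending only on `C`) such that
for all integers `n, k ≥ 2` and every sequence `a` with `a_i ≥ 2` for all `i`,
`a_0 ≤ 4·log₂ n`, and `a_{i+1} ≤ C·(log₂ k + log₂ a_i)` for all `i ≥ 0`, there is an index
`i ≤ log*₂ n + C'·log₂(2 + log*₂ n)` with `a_i ≤ C'·log₂ k`. -/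
theorem statement7 (C : ℝ) (hC : 4 < C) :
    ∃ C' : ℝ, 0 < C' ∧ ∀ (n k : ℕ), 2 ≤ n → 2 ≤ k →
      ∀ a : ℕ → ℝ, (∀ i, 2 ≤ a i) → a 0 ≤ 4 * Real.logb 2 n →
      (∀ i : ℕ, a (i + 1) ≤ C * (Real.logb 2 k + Real.logb 2 (a i))) →
      ∃ i : ℕ, (i : ℝ) ≤ (logStar n : ℝ) + C' * Real.logb 2 (2 + (logStar n : ℝ)) ∧
        a i ≤ C' * Real.logb 2 k := by
  classical
  have hC0 : (0:ℝ) < C := by linarith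
  refine ⟨48 * C^2, by positivity, ?_⟩
  intro n k hn hk a ha2 ha0 harec
  set M : ℝ := 16 * C^2 with hM
  have hM0 : (0:ℝ) < M := by positivity
  set s : ℝ := Real.logb 2 k with hsdef
  have hs : (1:ℝ) ≤ s := one_le_logb2 (by exact_mod_cast hk)
  clear_value M s
  set t : ℕ → ℝ := fun i => iterLog (i+1) (n:ℝ) with htdef
  have htstep : ∀ i, t (i+1) = Real.logb 2 (t i) := fun i => rfl
  have ht_0 : t 0 = Real.logb 2 (n:ℝ) := rfl
  have ht0 : (1:ℝ) ≤ t 0 := by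
    rw [ht_0]; exact one_le_logb2 (by exact_mod_cast hn)
  -- existence of an index where t drops below 2
  have hex : ∃ i, t i < 2 := by
    by_contra h
    push_neg at h
    have hdec : ∀ i, t i ≤ t 0 - i := by
      intro i
      induction i with
      | zero => simp
      | succ m ih =>
        have h1 := logb2_le_sub_one (h m)
        rw [htstep]
        push_cast
        linarith
    have h1 := hdec (Nat.ceil (t 0))
    have h2 := h (Nat.ceil (t 0))
    have h3 := Nat.le_ceil (t 0)
    linarith
  set i0 := Nat.find hex with hi0def
  have hi0 : t i0 < 2 := Nat.find_spec hex
  have hlt : ∀ j, j < i0 → 2 ≤ t j := fun j hj => le_of_not_gt (Nat.find_min hex hj)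
  have htiter : ∀ i, iterLog (i+1) (n:ℝ) = t i := fun i => rfl
  have htiter2 : ∀ i, iterLog (i+2) (n:ℝ) = Real.logb 2 (t i) := fun i => rfl
  clear_value t i0
  -- t i0 ≥ 1
  have hti0_1 : (1:ℝ) ≤ t i0 := by
    rcases Nat.eq_zero_or_eq_succ_pred i0 with h0 | h0
    · rw [h0]; exact ht0
    · have h2 : 2 ≤ t (i0 - 1) := hlt (i0 - 1) (by omega)
      have h3 : t i0 = Real.logb 2 (t (i0 - 1)) := by
        conv_lhs => rw [h0]
        exact htstep (i0 - 1)
      rw [h3]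
      exact one_le_logb2 h2
  -- bound on log of M
  have hlogM : Real.logb 2 M ≤ 4 + 2 * C := by
    have h1 : Real.logb 2 M = Real.logb 2 16 + Real.logb 2 (C^2) := by
      rw [hM, Real.logb_mul (by norm_num) (by positivity)]
    have h2 : Real.logb 2 16 = 4 := by
      have h16 : (16:ℝ) = 2^(4:ℕ) := by norm_num
      rw [h16, Real.logb_pow, logb2_two]; norm_num
    have h3 : Real.logb 2 (C^2) = 2 * Real.logb 2 C := by
      rw [Real.logb_pow]; norm_num
    have h4 : Real.logb 2 C ≤ C := logb2_le_self (by linarith)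
    rw [h1, h2, h3]; linarith
  -- the invariant
  have hinv : ∀ i, i ≤ i0 → a i ≤ M * (t i + s) := by
    intro i
    induction i with
    | zero =>
      intro _
      have h4M : (4:ℝ) ≤ M := by nlinarith
      calc a 0 ≤ 4 * t 0 := by rw [ht_0]; exact ha0
        _ ≤ M * t 0 := mul_le_mul_of_nonneg_right h4M (by linarith)
        _ ≤ M * (t 0 + s) := mul_le_mul_of_nonneg_left (by linarith) hM0.le
    | succ m ih =>
      intro hm
      have hmlt : m < i0 := Nat.lt_of_succ_le hm
      have h1 : a m ≤ M * (t m + s) := ih (le_of_lt hmlt)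
      have htm : 2 ≤ t m := hlt m hmlt
      have htm1 : (1:ℝ) ≤ t (m+1) := by rw [htstep]; exact one_le_logb2 htm
      have ham : (2:ℝ) ≤ a m := ha2 m
      have hMts : (0:ℝ) < M * (t m + s) := mul_pos hM0 (by linarith)
      have h2 : Real.logb 2 (a m) ≤ Real.logb 2 (M * (t m + s)) :=
        logb2_mono (by linarith) h1
      have h3 : Real.logb 2 (M * (t m + s)) = Real.logb 2 M + Real.logb 2 (t m + s) := by
        rw [Real.logb_mul (ne_of_gt hM0) (by positivity)]
      have h4 : Real.logb 2 (t m + s) ≤ 1 + Real.logb 2 (t m) + Real.logb 2 s := by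
        have hle : t m + s ≤ 2 * (t m * s) := by
          nlinarith [mul_nonneg (show (0:ℝ) ≤ t m - 1 by linarith)
            (show (0:ℝ) ≤ s - 1 by linarith)]
        calc Real.logb 2 (t m + s) ≤ Real.logb 2 (2 * (t m * s)) :=
              logb2_mono (by linarith) hle
          _ = Real.logb 2 2 + (Real.logb 2 (t m) + Real.logb 2 s) := by
              rw [Real.logb_mul (by norm_num) (by positivity),
                Real.logb_mul (by positivity) (by positivity)]
          _ = 1 + Real.logb 2 (t m) + Real.logb 2 s := by rw [logb2_two]; ring
      have h5 : Real.logb 2 s ≤ s := logb2_le_self hs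
      have h6 : Real.logb 2 (t m) = t (m+1) := (htstep m).symm
      have h8 : Real.logb 2 (a m) ≤ (4 + 2*C) + 1 + t (m+1) + s := by
        rw [h3] at h2
        rw [h6] at h4
        linarith
      have h9 : a (m+1) ≤ C * (s + ((4 + 2*C) + 1 + t (m+1) + s)) := by
        calc a (m+1) ≤ C * (s + Real.logb 2 (a m)) := harec m
          _ ≤ C * (s + ((4 + 2*C) + 1 + t (m+1) + s)) := by
              apply mul_le_mul_of_nonneg_left _ (le_of_lt hC0)
              linarith
      have hMexp : M * (t (m+1) + s) = 16*C^2 * t (m+1) + 16*C^2 * s := by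
        rw [hM]; ring
      have e1 : (0:ℝ) ≤ (16*C^2 - C) * (t (m+1) - 1) :=
        mul_nonneg (by nlinarith) (by linarith)
      have e2 : (0:ℝ) ≤ (16*C^2 - 2*C) * (s - 1) :=
        mul_nonneg (by nlinarith) (by linarith)
      have h9' : C * (s + ((4 + 2*C) + 1 + t (m+1) + s))
          = C * t (m+1) + 2*(C*s) + 5*C + 2*C^2 := by ring
      have e3 : (0:ℝ) ≤ C * (30*C - 8) := mul_nonneg hC0.le (by linarith)
      rw [hMexp]
      linarith [h9, e1, e2, e3, h9'.le, h9'.ge]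
  -- i0 ≤ logStar n
  have hi0le : i0 ≤ logStar n := by
    have hmem : (i0 + 2) ∈ {i : ℕ | iterLog i (n:ℝ) ≤ 1} := by
      show iterLog (i0 + 2) (n:ℝ) ≤ 1
      have hh : iterLog (i0 + 2) (n:ℝ) = Real.logb 2 (t i0) := htiter2 i0
      rw [hh]
      have := logb2_mono (show (0:ℝ) < t i0 by linarith) (le_of_lt hi0)
      rwa [logb2_two] at this
    apply le_csInf ⟨i0 + 2, hmem⟩
    intro b hb
    by_contra hcon
    push_neg at hcon
    have hb1 : iterLog b (n:ℝ) ≤ 1 := hb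
    rcases Nat.eq_zero_or_eq_succ_pred b with h0 | h0
    · rw [h0] at hb1
      have h2n : (2:ℝ) ≤ (n:ℝ) := by exact_mod_cast hn
      simp only [iterLog] at hb1
      linarith
    · have hmm : b - 1 < i0 := by omega
      have h2 : 2 ≤ t (b-1) := hlt (b-1) hmm
      have h3 : iterLog b (n:ℝ) = t (b-1) := by rw [h0]; exact htiter (b-1)
      rw [h3] at hb1
      linarith
  refine ⟨i0, ?_, ?_⟩
  · have hlog2 : (1:ℝ) ≤ Real.logb 2 (2 + (logStar n : ℝ)) := by
      apply one_le_logb2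
      have : (0:ℝ) ≤ (logStar n : ℝ) := Nat.cast_nonneg _
      linarith
    have hcast : (i0 : ℝ) ≤ (logStar n : ℝ) := by exact_mod_cast hi0le
    linarith [mul_pos (show (0:ℝ) < 48*C^2 by positivity)
      (show (0:ℝ) < Real.logb 2 (2 + (logStar n : ℝ)) by linarith)]
  · have hfin := hinv i0 (le_refl i0)
    have hC'exp : (48*C^2) * s = 3 * (M * s) := by rw [hM]; ring
    have h1 : M * (t i0 + s) ≤ M * (2 + s) :=
      mul_le_mul_of_nonneg_left (by linarith) (le_of_lt hM0)
    have e4 : (0:ℝ) ≤ M * (s - 1) := mul_nonneg hM0.le (by linarith)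
    have h2 : M * (2 + s) ≤ 3 * (M * s) := by nlinarith [e4]
    linarith [hfin, h1, h2, hC'exp.le, hC'exp.ge]
end

section
/- Let k ≥ 2 be an integer, m an integer with m ≥ 2¹¹·k⁴, and x ∈ ℝⁿ with 0 ≤ x_i ≤ 1/5 for all i and Σ_i x_i ≤ k. Assign each index i ∈ {1,…,n} independently and uniformly at random to one of m buckets. Then the probability that some bucket b satisfies Σ_{i assigned to b} x_i > 4/5 is at most 1/m. -/
/-!
Fix a bucket `b`. As every weight is at most `1/5`, a bucket of weight above `4/5` makes the sum
of `x_{i₁} x_{i₂} x_{i₃} x_{i₄}` over ordered 4-tuples of distinct indices in `b` at least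
`4!/5⁴`. Distinct indices land in `b` independently, so the expectation of that sum is the same
sum over all indices times `m⁻⁴`, hence at most `k⁴/m⁴`. Markov's inequality and a union bound
over the `m` buckets give the bound `(625/24) k⁴/m³ ≤ 1/m`.
-/

open MeasureTheory ProbabilityTheory
open scoped ENNReal Nat

section DistinctProdSum

variable {ι : Type*} [DecidableEq ι]

/-- `distinctProdSum y r S` is the sum of `y i₁ * ⋯ * y iᵣ` over all ordered `r`-tuples of
distinct elements of `S`, i.e. `r!` times the `r`-th elementary symmetric polynomial. -/
def distinctProdSum {R : Type*} [CommSemiring R] (y : ι → R) : ℕ → Finset ι → R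
  | 0, _ => 1
  | r + 1, S => ∑ i ∈ S, y i * distinctProdSum y r (S.erase i)

section Ordered

variable {R : Type*} [CommRing R] [LinearOrder R] [IsStrictOrderedRing R] {y : ι → R}

theorem distinctProdSum_nonneg (hy : ∀ i, 0 ≤ y i) :
    ∀ (r : ℕ) (S : Finset ι), 0 ≤ distinctProdSum y r S
  | 0, _ => zero_le_one
  | r + 1, _ => Finset.sum_nonneg fun i _ => mul_nonneg (hy i) (distinctProdSum_nonneg hy r _)

/-- Removing one element from `S` costs at most `a` of its total weight, so induction on `r`
applies. -/
theorem factorial_mul_pow_le_distinctProdSum {a : R} (ha : 0 ≤ a) (hy0 : ∀ i, 0 ≤ y i)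
    (hya : ∀ i, y i ≤ a) :
    ∀ (r : ℕ) (S : Finset ι), r * a ≤ ∑ i ∈ S, y i → r ! * a ^ r ≤ distinctProdSum y r S
  | 0, _, _ => by simp [distinctProdSum]
  | r + 1, S, hS => by
    have herase : ∀ i ∈ S, r ! * a ^ r ≤ distinctProdSum y r (S.erase i) := fun i hi =>
      factorial_mul_pow_le_distinctProdSum ha hy0 hya r _ <| by
        rw [Finset.sum_erase_eq_sub hi]
        push_cast at hS
        linarith [hya i]
    calc ((r + 1) ! : R) * a ^ (r + 1) = (r + 1) * a * (r ! * a ^ r) := by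
          push_cast [Nat.factorial_succ]; ring
      _ ≤ (∑ i ∈ S, y i) * (r ! * a ^ r) := by
          gcongr
          exact_mod_cast hS
      _ ≤ ∑ i ∈ S, y i * distinctProdSum y r (S.erase i) := by
          rw [Finset.sum_mul]
          exact Finset.sum_le_sum fun i hi => mul_le_mul_of_nonneg_left (herase i hi) (hy0 i)

end Ordered

theorem ENNReal.ofReal_distinctProdSum {y : ι → ℝ} (hy : ∀ i, 0 ≤ y i) :
    ∀ (r : ℕ) (S : Finset ι),
      ENNReal.ofReal (distinctProdSum y r S) = distinctProdSum (fun i => ENNReal.ofReal (y i)) r S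
  | 0, _ => ENNReal.ofReal_one
  | r + 1, S => by
    rw [distinctProdSum, distinctProdSum,
      ENNReal.ofReal_sum_of_nonneg fun i _ => mul_nonneg (hy i) (distinctProdSum_nonneg hy r _)]
    refine Finset.sum_congr rfl fun i _ => ?_
    rw [ENNReal.ofReal_mul (hy i), ENNReal.ofReal_distinctProdSum hy r]

theorem ENNReal.distinctProdSum_le_pow_sum (y : ι → ℝ≥0∞) :
    ∀ (r : ℕ) (S : Finset ι), distinctProdSum y r S ≤ (∑ i ∈ S, y i) ^ r
  | 0, _ => (pow_zero _).ge
  | r + 1, S =>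
    calc ∑ i ∈ S, y i * distinctProdSum y r (S.erase i)
        ≤ ∑ i ∈ S, y i * (∑ j ∈ S, y j) ^ r := by
          gcongr with i hi
          exact (ENNReal.distinctProdSum_le_pow_sum y r _).trans
            (pow_le_pow_left' (Finset.sum_le_sum_of_subset (S.erase_subset i)) r)
      _ = (∑ i ∈ S, y i) ^ (r + 1) := by rw [← Finset.sum_mul, pow_succ']

section Probability

variable {Ω : Type*} [MeasurableSpace Ω] {μ : Measure Ω} {Z : ι → Ω → ℝ≥0∞}

theorem measurable_distinctProdSum (hZ : ∀ i, Measurable (Z i)) :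
    ∀ (r : ℕ) (S : Finset ι), Measurable fun ω => distinctProdSum (Z · ω) r S
  | 0, _ => measurable_const
  | r + 1, _ => Finset.measurable_sum _ fun i _ => (hZ i).mul (measurable_distinctProdSum hZ r _)

/-- The factor `∏ j ∈ T, Z j` carries the indices already chosen, which makes the induction
on `r` go through. -/
theorem lintegral_prod_mul_distinctProdSum (hZ : iIndepFun Z μ) (hZm : ∀ i, Measurable (Z i)) :
    ∀ (r : ℕ) (S T : Finset ι), Disjoint S T →
      ∫⁻ ω, (∏ j ∈ T, Z j ω) * distinctProdSum (Z · ω) r S ∂μ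
        = (∏ j ∈ T, ∫⁻ ω, Z j ω ∂μ) * distinctProdSum (fun i => ∫⁻ ω, Z i ω ∂μ) r S
  | 0, _, T, _ => by
    simp only [distinctProdSum, mul_one]
    exact lintegral_prod_eq_prod_lintegral_of_indepFun T Z hZ hZm
  | r + 1, S, T, hST => by
    have hnotin : ∀ i ∈ S, i ∉ T := fun i hi => Finset.disjoint_left.1 hST hi
    have hdisj : ∀ i ∈ S, Disjoint (S.erase i) (insert i T) := fun i hi =>
      Finset.disjoint_insert_right.2
        ⟨Finset.notMem_erase i S, hST.mono_left (S.erase_subset i)⟩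
    calc ∫⁻ ω, (∏ j ∈ T, Z j ω) * distinctProdSum (Z · ω) (r + 1) S ∂μ
        = ∑ i ∈ S, ∫⁻ ω, (∏ j ∈ insert i T, Z j ω) * distinctProdSum (Z · ω) r (S.erase i) ∂μ := by
          rw [← lintegral_finsetSum _ fun i _ =>
            (Finset.measurable_prod _ fun j _ => hZm j).fun_mul
              (measurable_distinctProdSum hZm r _)]
          refine lintegral_congr fun ω => ?_
          rw [distinctProdSum, Finset.mul_sum]
          refine Finset.sum_congr rfl fun i hi => ?_
          rw [Finset.prod_insert (hnotin i hi)]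
          ring
      _ = ∑ i ∈ S, (∏ j ∈ insert i T, ∫⁻ ω, Z j ω ∂μ)
            * distinctProdSum (fun i => ∫⁻ ω, Z i ω ∂μ) r (S.erase i) :=
          Finset.sum_congr rfl fun i hi =>
            lintegral_prod_mul_distinctProdSum hZ hZm r _ _ (hdisj i hi)
      _ = (∏ j ∈ T, ∫⁻ ω, Z j ω ∂μ) * distinctProdSum (fun i => ∫⁻ ω, Z i ω ∂μ) (r + 1) S := by
          rw [distinctProdSum, Finset.mul_sum]
          refine Finset.sum_congr rfl fun i hi => ?_
          rw [Finset.prod_insert (hnotin i hi)]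
          ring

theorem lintegral_distinctProdSum (hZ : iIndepFun Z μ) (hZm : ∀ i, Measurable (Z i))
    (r : ℕ) (S : Finset ι) :
    ∫⁻ ω, distinctProdSum (Z · ω) r S ∂μ = distinctProdSum (fun i => ∫⁻ ω, Z i ω ∂μ) r S := by
  simpa using lintegral_prod_mul_distinctProdSum hZ hZm r S ∅ (Finset.disjoint_empty_right S)

end Probability

end DistinctProdSum

section Buckets

variable {ι Ω β : Type*} [DecidableEq β] {B : ι → Ω → β} {b : β}

def bucketRestrict {R : Type*} [Zero R] (B : ι → Ω → β) (x : ι → R) (b : β) (ω : Ω) (i : ι) :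
    R :=
  if B i ω = b then x i else 0

theorem sum_bucketRestrict [Fintype ι] {R : Type*} [AddCommMonoid R] (x : ι → R) (ω : Ω) :
    ∑ i, bucketRestrict B x b ω i = ∑ i ∈ Finset.univ.filter (fun i => B i ω = b), x i :=
  (Finset.sum_filter _ _).symm

theorem ofReal_bucketRestrict (x : ι → ℝ) (ω : Ω) :
    (fun i => ENNReal.ofReal (bucketRestrict B x b ω i))
      = bucketRestrict B (fun i => ENNReal.ofReal (x i)) b ω := by
  ext i; by_cases h : B i ω = b <;> simp [bucketRestrict, h]

variable [MeasurableSpace Ω] {μ : Measure Ω} [MeasurableSpace β] [MeasurableSingletonClass β]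

theorem measurable_bucketRestrict {R : Type*} [Zero R] [MeasurableSpace R]
    (hB : ∀ i, Measurable (B i)) (x : ι → R) (i : ι) :
    Measurable fun ω => bucketRestrict B x b ω i :=
  Measurable.ite (hB i (measurableSet_singleton b)) measurable_const measurable_const

theorem lintegral_bucketRestrict (hB : ∀ i, Measurable (B i)) (x : ι → ℝ≥0∞) (i : ι) :
    ∫⁻ ω, bucketRestrict B x b ω i ∂μ = x i * μ (B i ⁻¹' {b}) := by
  rw [← lintegral_indicator_const (hB i (measurableSet_singleton b))]
  congr 1 with ω
  by_cases h : B i ω = b <;> simp [bucketRestrict, h]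

theorem lintegral_distinctProdSum_bucketRestrict_le [Fintype ι] [DecidableEq ι]
    (hB : ∀ i, Measurable (B i)) (hindep : iIndepFun B μ) {x : ι → ℝ≥0∞} {p : ℝ≥0∞}
    (hp : ∀ i, μ (B i ⁻¹' {b}) ≤ p) (r : ℕ) :
    ∫⁻ ω, distinctProdSum (bucketRestrict B x b ω) r Finset.univ ∂μ ≤ ((∑ i, x i) * p) ^ r := by
  have hindep' : iIndepFun (fun i ω => bucketRestrict B x b ω i) μ :=
    hindep.comp (fun i c => if c = b then x i else 0)
      fun i => Measurable.ite (measurableSet_singleton b) measurable_const measurable_const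
  rw [lintegral_distinctProdSum hindep' (measurable_bucketRestrict hB x)]
  refine (ENNReal.distinctProdSum_le_pow_sum _ r _).trans (pow_le_pow_left' ?_ r)
  rw [Finset.sum_mul]
  gcongr with i
  rw [lintegral_bucketRestrict hB]
  gcongr
  exact hp i

/-- Markov's inequality applied to the weighted count of `r`-tuples of distinct indices in
bucket `b`. -/
theorem measure_bucket_weight_ge_le [Fintype ι] [DecidableEq ι] (hB : ∀ i, Measurable (B i))
    (hindep : iIndepFun B μ) {p : ℝ} (hp0 : 0 ≤ p) (hp : ∀ i, μ (B i ⁻¹' {b}) ≤ ENNReal.ofReal p)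
    {x : ι → ℝ} {a : ℝ} (ha : 0 < a) (hx0 : ∀ i, 0 ≤ x i) (hxa : ∀ i, x i ≤ a) (r : ℕ) :
    μ {ω | r * a ≤ ∑ i ∈ Finset.univ.filter (fun i => B i ω = b), x i}
      ≤ ENNReal.ofReal (((∑ i, x i) * p) ^ r / (r ! * a ^ r)) := by
  set Z : Ω → ι → ℝ≥0∞ := bucketRestrict B (fun i => ENNReal.ofReal (x i)) b with hZ
  have hlarge : ∀ ω, r * a ≤ ∑ i ∈ Finset.univ.filter (fun i => B i ω = b), x i →
      ENNReal.ofReal (r ! * a ^ r) ≤ distinctProdSum (Z ω) r Finset.univ := fun ω hω => by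
    have hy0 : ∀ i, 0 ≤ bucketRestrict B x b ω i := fun i => by
      by_cases h : B i ω = b <;> simp [bucketRestrict, h, hx0 i]
    have hya : ∀ i, bucketRestrict B x b ω i ≤ a := fun i => by
      by_cases h : B i ω = b <;> simp [bucketRestrict, h, hxa i, ha.le]
    rw [← sum_bucketRestrict] at hω
    rw [hZ, ← ofReal_bucketRestrict, ← ENNReal.ofReal_distinctProdSum hy0]
    exact ENNReal.ofReal_le_ofReal (factorial_mul_pow_le_distinctProdSum ha.le hy0 hya r _ hω)
  have hsum0 : 0 ≤ ∑ i, x i := Finset.sum_nonneg fun i _ => hx0 i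
  have hc : ENNReal.ofReal (r ! * a ^ r) ≠ 0 := by
    rw [ne_eq, ENNReal.ofReal_eq_zero, not_le]; positivity
  calc μ {ω | r * a ≤ ∑ i ∈ Finset.univ.filter (fun i => B i ω = b), x i}
      ≤ μ {ω | ENNReal.ofReal (r ! * a ^ r) ≤ distinctProdSum (Z ω) r Finset.univ} :=
        measure_mono hlarge
    _ ≤ (∫⁻ ω, distinctProdSum (Z ω) r Finset.univ ∂μ) / ENNReal.ofReal (r ! * a ^ r) :=
        meas_ge_le_lintegral_div
          (measurable_distinctProdSum (measurable_bucketRestrict hB _) r _).aemeasurable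
          hc ENNReal.ofReal_ne_top
    _ ≤ ENNReal.ofReal (((∑ i, x i) * p) ^ r) / ENNReal.ofReal (r ! * a ^ r) := by
        gcongr
        rw [ENNReal.ofReal_pow (by positivity), ENNReal.ofReal_mul (by positivity),
          ENNReal.ofReal_sum_of_nonneg fun i _ => hx0 i]
        exact lintegral_distinctProdSum_bucketRestrict_le hB hindep hp r
    _ = ENNReal.ofReal (((∑ i, x i) * p) ^ r / (r ! * a ^ r)) :=
        (ENNReal.ofReal_div_of_pos (by positivity)).symm

end Buckets

theorem statement9_general (k m n : ℕ) (hm : 2 ^ 11 * k ^ 4 ≤ m)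
    (x : Fin n → ℝ) (hx : ∀ i, 0 ≤ x i ∧ x i ≤ 1 / 5)
    (hsum : ∑ i, x i ≤ (k : ℝ))
    (Ω : Type) [MeasurableSpace Ω] (μ : Measure Ω)
    (B : Fin n → Ω → Fin m)
    (hmeas : ∀ i, Measurable (B i))
    (hindep : iIndepFun B μ)
    (hunif : ∀ (i : Fin n) (b : Fin m), μ {ω | B i ω = b} = 1 / (m : ℝ≥0∞)) :
    μ {ω | ∃ b : Fin m,
        (4 : ℝ) / 5 < ∑ i ∈ Finset.univ.filter (fun i => B i ω = b), x i}
      ≤ 1 / (m : ℝ≥0∞) := by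
  rcases Nat.eq_zero_or_pos m with rfl | hm0
  · simp
  have hmR : (0 : ℝ) < m := Nat.cast_pos.2 hm0
  have hp : ∀ i b, μ (B i ⁻¹' {b}) ≤ ENNReal.ofReal (m : ℝ)⁻¹ := fun i b => by
    rw [ENNReal.ofReal_inv_of_pos hmR, ENNReal.ofReal_natCast, ← one_div]
    exact (hunif i b).le
  set q : ℝ := (k * (m : ℝ)⁻¹) ^ 4 / (4 ! * (1 / 5) ^ 4) with hq_def
  have hbucket (b : Fin m) :
      μ {ω | (4 : ℝ) / 5 < ∑ i ∈ Finset.univ.filter (fun i => B i ω = b), x i}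
        ≤ ENNReal.ofReal q := by
    have hsum0 : 0 ≤ ∑ i, x i := Finset.sum_nonneg fun i _ => (hx i).1
    calc μ {ω | (4 : ℝ) / 5 < ∑ i ∈ Finset.univ.filter (fun i => B i ω = b), x i}
        ≤ μ {ω | ((4 : ℕ) : ℝ) * (1 / 5) ≤ ∑ i ∈ Finset.univ.filter (fun i => B i ω = b), x i} :=
          measure_mono fun ω hω => by norm_num at hω ⊢; exact hω.le
      _ ≤ ENNReal.ofReal (((∑ i, x i) * (m : ℝ)⁻¹) ^ 4 / (4 ! * (1 / 5) ^ 4)) :=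
          measure_bucket_weight_ge_le hmeas hindep (inv_nonneg.2 hmR.le) (hp · b) (by norm_num)
            (fun i => (hx i).1) (fun i => (hx i).2) 4
      _ ≤ ENNReal.ofReal q := by rw [hq_def]; gcongr
  have hq : m * q ≤ (m : ℝ)⁻¹ := by
    have hmk : (2 : ℝ) ^ 11 * k ^ 4 ≤ m := by exact_mod_cast hm
    have hm1 : (1 : ℝ) ≤ m := by exact_mod_cast hm0
    have h24 : ((4 ! : ℕ) : ℝ) = 24 := by norm_num [Nat.factorial]
    rw [hq_def, h24]
    field_simp
    nlinarith
  calc μ {ω | ∃ b : Fin m, (4 : ℝ) / 5 < ∑ i ∈ Finset.univ.filter (fun i => B i ω = b), x i}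
      ≤ ∑ b : Fin m,
          μ {ω | (4 : ℝ) / 5 < ∑ i ∈ Finset.univ.filter (fun i => B i ω = b), x i} := by
        rw [Set.ofPred_exists]
        exact measure_iUnion_fintype_le _ _
    _ ≤ ∑ _b : Fin m, ENNReal.ofReal q := Finset.sum_le_sum fun b _ => hbucket b
    _ = ENNReal.ofReal (m * q) := by
        rw [Finset.sum_const, Finset.card_univ, Fintype.card_fin, nsmul_eq_mul,
          ENNReal.ofReal_mul hmR.le, ENNReal.ofReal_natCast]
    _ ≤ 1 / (m : ℝ≥0∞) := by
        rw [one_div, ← ENNReal.ofReal_natCast, ← ENNReal.ofReal_inv_of_pos hmR]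
        exact ENNReal.ofReal_le_ofReal hq

/-- Let `k ≥ 2`, `m ≥ 2¹¹·k⁴`, and `x ∈ ℝⁿ` with `0 ≤ x_i ≤ 1/5` for all `i` and
`∑ x_i ≤ k`. Assign each index `i` independently and uniformly at random to one of `m`
buckets. Then the probability that some bucket has total `x`-weight exceeding `4/5` is at
most `1/m`. -/
theorem statement9 (k m n : ℕ) (hk : 2 ≤ k) (hm : 2 ^ 11 * k ^ 4 ≤ m)
    (x : Fin n → ℝ) (hx : ∀ i, 0 ≤ x i ∧ x i ≤ 1 / 5)
    (hsum : ∑ i, x i ≤ (k : ℝ))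
    (Ω : Type) [MeasurableSpace Ω] (μ : Measure Ω) [IsProbabilityMeasure μ]
    (B : Fin n → Ω → Fin m)
    (hmeas : ∀ i, Measurable (B i))
    (hindep : iIndepFun B μ)
    (hunif : ∀ (i : Fin n) (b : Fin m), μ {ω | B i ω = b} = 1 / (m : ℝ≥0∞)) :
    μ {ω | ∃ b : Fin m,
        (4 : ℝ) / 5 < ∑ i ∈ Finset.univ.filter (fun i => B i ω = b), x i}
      ≤ 1 / (m : ℝ≥0∞) :=
  statement9_general k m n hm x hx hsum Ω μ B hmeas hindep hunif
end

section
/- Let k ≥ 2 be an integer, m an integer with m ≥ 2¹¹·k⁴, λ := 1/(10·log₂ m + 5), and x ∈ ℝⁿ with 0 ≤ x_i ≤ λ for all i and Σ_i x_i ≤ k. Assign each index i ∈ {1,…,n} independently and uniformly at random to one of m buckets. Then for each fixed bucket b, the probability that Σ_{i assigned to b} x_i > 1/5 is at most 1/(2m²). -/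
open MeasureTheory ProbabilityTheory
open scoped ENNReal

/-!
Chernoff bound for the weight `W = ∑ᵢ xᵢ·1[B i = b]` of a bucket, at `t = 20 log m + 10 log 2`.
Since `t·xᵢ ≤ t·λ = 2 log 2`, every `e^{t xᵢ} ≤ 4`, so `e^{t xᵢ} - 1 ≤ 4 t xᵢ` and the moment
generating function of a summand is `1 + (e^{t xᵢ} - 1)/m ≤ exp (4 t xᵢ / m)`. By independence
`E e^{tW} ≤ exp (4 t k / m) ≤ exp (t / 10)` because `m ≥ 40 k`, hence
`P(W ≥ 1/5) ≤ exp (-t/5 + t/10) = 1/(2m²)`.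
-/

open Real Finset

theorem Real.exp_sub_one_le_mul_exp (a : ℝ) : exp a - 1 ≤ a * exp a := by
  have h := mul_le_mul_of_nonneg_right (add_one_le_exp (-a)) (exp_pos a).le
  rw [← exp_add, neg_add_cancel, exp_zero] at h
  linarith

section Indicator

variable {Ω : Type*}

lemma exp_mul_indicator_const (E : Set Ω) (c t : ℝ) :
    (fun ω => exp (t * E.indicator (fun _ => c) ω))
      = fun ω => 1 + E.indicator (fun _ => exp (t * c) - 1) ω := by
  ext ω
  by_cases h : ω ∈ E <;> simp [h]

variable [MeasurableSpace Ω] {μ : Measure Ω} {E : Set Ω}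

lemma integrable_exp_mul_indicator_const [IsFiniteMeasure μ] (hE : MeasurableSet E) (c t : ℝ) :
    Integrable (fun ω => exp (t * E.indicator (fun _ => c) ω)) μ := by
  rw [exp_mul_indicator_const]
  exact (integrable_const 1).add ((integrable_const _).indicator hE)

lemma mgf_indicator_const [IsProbabilityMeasure μ] (hE : MeasurableSet E) (c t : ℝ) :
    mgf (E.indicator fun _ => c) μ t = 1 + (exp (t * c) - 1) * μ.real E := by
  rw [mgf, exp_mul_indicator_const, integral_add (integrable_const 1)
    ((integrable_const _).indicator hE), integral_indicator_const _ hE]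
  simp [mul_comm]

end Indicator

section Buckets

variable {Ω ι β : Type*} [Fintype ι] [DecidableEq β]

def bucketWeight (B : ι → Ω → β) (x : ι → ℝ) (b : β) (ω : Ω) : ℝ :=
  ∑ i ∈ univ.filter (fun i => B i ω = b), x i

lemma bucketWeight_eq_sum_indicator (B : ι → Ω → β) (x : ι → ℝ) (b : β) :
    bucketWeight B x b = ∑ i, {ω | B i ω = b}.indicator (fun _ => x i) := by
  ext ω
  simp [bucketWeight, sum_filter, Set.indicator_apply]

theorem measureReal_bucketWeight_ge_le_exp [MeasurableSpace Ω] [MeasurableSpace β]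
    [MeasurableSingletonClass β] {μ : Measure Ω} [IsProbabilityMeasure μ] {B : ι → Ω → β}
    {x : ι → ℝ} {b : β} {p t c : ℝ}
    (hB : ∀ i, Measurable (B i)) (hindep : iIndepFun B μ)
    (hp : ∀ i, μ.real {ω | B i ω = b} ≤ p) (hx : ∀ i, 0 ≤ x i) (ht : 0 ≤ t)
    (hc : ∀ i, exp (t * x i) ≤ c) (a : ℝ) :
    μ.real {ω | a ≤ bucketWeight B x b ω} ≤ exp (-t * a + c * t * p * ∑ i, x i) := by
  set Y : ι → Ω → ℝ := fun i => {ω | B i ω = b}.indicator (fun _ => x i)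
  have hE : ∀ i, MeasurableSet {ω | B i ω = b} := fun i => hB i (measurableSet_singleton b)
  have hY_meas : ∀ i, Measurable (Y i) := fun i => measurable_const.indicator (hE i)
  have hY_indep : iIndepFun Y μ :=
    hindep.comp (fun i => ({b} : Set β).indicator fun _ => x i)
      (fun _ => measurable_const.indicator (measurableSet_singleton b))
  have hY_mgf : ∀ i, mgf (Y i) μ t ≤ exp (c * t * p * x i) := by
    intro i
    have htx : 0 ≤ t * x i := mul_nonneg ht (hx i)
    have hc0 : 0 ≤ c := (exp_pos _).le.trans (hc i)
    have hexp_le : exp (t * x i) - 1 ≤ c * (t * x i) :=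
      (exp_sub_one_le_mul_exp _).trans (by rw [mul_comm]; gcongr; exact hc i)
    calc mgf (Y i) μ t = 1 + (exp (t * x i) - 1) * μ.real {ω | B i ω = b} :=
          mgf_indicator_const (hE i) _ _
      _ ≤ 1 + c * (t * x i) * p :=
          (add_le_add_iff_left 1).2
            (mul_le_mul hexp_le (hp i) measureReal_nonneg (mul_nonneg hc0 htx))
      _ ≤ exp (c * t * p * x i) := by
          linarith [add_one_le_exp (c * t * p * x i)]
  have h_int : Integrable (fun ω => exp (t * (∑ i, Y i) ω)) μ :=
    hY_indep.integrable_exp_mul_sum hY_meas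
      fun i _ => integrable_exp_mul_indicator_const (hE i) _ _
  calc μ.real {ω | a ≤ bucketWeight B x b ω} = μ.real {ω | a ≤ (∑ i, Y i) ω} := by
        rw [bucketWeight_eq_sum_indicator]
    _ ≤ exp (-t * a) * mgf (∑ i, Y i) μ t := measure_ge_le_exp_mul_mgf a ht h_int
    _ = exp (-t * a) * ∏ i, mgf (Y i) μ t := by rw [hY_indep.mgf_sum hY_meas]
    _ ≤ exp (-t * a) * ∏ i, exp (c * t * p * x i) := by
        gcongr with i
        · exact fun i _ => mgf_nonneg
        · exact hY_mgf i
    _ = exp (-t * a + c * t * p * ∑ i, x i) := by rw [← exp_sum, ← exp_add, mul_sum]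

end Buckets

lemma log_chernoff_parameter_nonneg {m : ℕ} (hm : 0 < m) : 0 ≤ 20 * log m + 10 * log 2 := by
  have := log_nonneg (Nat.one_le_cast.2 hm)
  positivity

lemma exp_mul_le_four {m : ℕ} (hm : 0 < m) {y : ℝ} (hy : y ≤ 1 / (10 * logb 2 m + 5)) :
    exp ((20 * log m + 10 * log 2) * y) ≤ 4 := by
  have hlog2 : 0 < log 2 := log_pos one_lt_two
  have hlogm : 0 ≤ log m := log_nonneg (by exact_mod_cast hm)
  have hlam : 1 / (10 * logb 2 m + 5) = 2 * log 2 / (20 * log m + 10 * log 2) := by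
    rw [logb]
    field_simp
    ring
  calc exp ((20 * log m + 10 * log 2) * y) ≤ exp (2 * log 2) := by
        rw [hlam, le_div_iff₀' (by positivity)] at hy
        exact exp_le_exp.2 hy
    _ = 4 := by rw [← log_rpow two_pos, exp_log (by positivity)]; norm_num

lemma exp_chernoff_exponent_le {m k : ℕ} (hm : 0 < m) (hkm : 40 * k ≤ m) {S : ℝ} (hS : S ≤ k) :
    exp (-(20 * log m + 10 * log 2) * (1 / 5) + 4 * (20 * log m + 10 * log 2) * (1 / m) * S)
      ≤ 1 / (2 * (m : ℝ) ^ 2) := by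
  have hm' : (0 : ℝ) < m := by exact_mod_cast hm
  have hkm' : (40 : ℝ) * k ≤ m := by exact_mod_cast hkm
  have ht := log_chernoff_parameter_nonneg hm
  -- `4 S / m ≤ 4 k / m ≤ 1/10`, so the exponent is at most `-t/10 = -(2 log m + log 2)`.
  have hS' : 4 * (1 / m) * S ≤ 1 / 10 := by
    rw [mul_one_div, div_mul_eq_mul_div, div_le_iff₀ hm']
    linarith
  calc _ ≤ exp (-(2 * log m + log 2)) := by
        gcongr
        nlinarith [mul_le_mul_of_nonneg_left hS' ht]
    _ = 1 / (2 * (m : ℝ) ^ 2) := by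
        rw [exp_neg, exp_add, exp_log two_pos,
          show 2 * log (m : ℝ) = log ((m : ℝ) ^ 2) by simp [log_pow], exp_log (by positivity)]
        ring

theorem statement10_general (k m n : ℕ) (hm : 2 ^ 11 * k ^ 4 ≤ m)
    (x : Fin n → ℝ) (hx : ∀ i, 0 ≤ x i ∧ x i ≤ 1 / (10 * Real.logb 2 m + 5))
    (hsum : ∑ i, x i ≤ (k : ℝ))
    (Ω : Type) [MeasurableSpace Ω] (μ : Measure Ω) [IsProbabilityMeasure μ]
    (B : Fin n → Ω → Fin m)
    (hmeas : ∀ i, Measurable (B i))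
    (hindep : iIndepFun B μ)
    (hunif : ∀ (i : Fin n) (b : Fin m), μ {ω | B i ω = b} = 1 / (m : ℝ≥0∞))
    (b : Fin m) :
    μ {ω | (1 : ℝ) / 5 < ∑ i ∈ Finset.univ.filter (fun i => B i ω = b), x i}
      ≤ 1 / (2 * (m : ℝ≥0∞) ^ 2) := by
  have hm0 : 0 < m := b.pos
  have hkm : 40 * k ≤ m := by
    have := Nat.le_self_pow four_ne_zero k
    omega
  have hp : ∀ i, μ.real {ω | B i ω = b} ≤ 1 / m := fun i => by simp [measureReal_def, hunif]
  have hchernoff := measureReal_bucketWeight_ge_le_exp hmeas hindep hp (fun i => (hx i).1)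
    (log_chernoff_parameter_nonneg hm0)
    (fun i => exp_mul_le_four hm0 (hx i).2) (1 / 5)
  calc μ {ω | (1 : ℝ) / 5 < ∑ i ∈ Finset.univ.filter (fun i => B i ω = b), x i}
      ≤ μ {ω | 1 / 5 ≤ bucketWeight B x b ω} := 
        measure_mono fun ω (hω : 1 / 5 < _) => show 1 / 5 ≤ bucketWeight B x b ω from hω.le
    _ ≤ ENNReal.ofReal (1 / (2 * (m : ℝ) ^ 2)) :=
        (ENNReal.le_ofReal_iff_toReal_le (measure_ne_top _ _) (by positivity)).2
          (hchernoff.trans (exp_chernoff_exponent_le hm0 hkm hsum))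
    _ = 1 / (2 * (m : ℝ≥0∞) ^ 2) := by
        rw [ENNReal.ofReal_div_of_pos (by positivity)]
        simp [ENNReal.ofReal_mul, ENNReal.ofReal_pow]

/-- Let `k ≥ 2`, `m ≥ 2¹¹·k⁴`, `λ := 1/(10·log₂ m + 5)`, and `x ∈ ℝⁿ` with
`0 ≤ x_i ≤ λ` for all `i` and `∑ x_i ≤ k`. Assign each index `i` independently and
uniformly at random to one of `m` buckets. Then for each fixed bucket `b`, the probability
that the total `x`-weight of bucket `b` exceeds `1/5` is at most `1/(2m²)`. -/
theorem statement10 (k m n : ℕ) (hk : 2 ≤ k) (hm : 2 ^ 11 * k ^ 4 ≤ m)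
    (x : Fin n → ℝ) (hx : ∀ i, 0 ≤ x i ∧ x i ≤ 1 / (10 * Real.logb 2 m + 5))
    (hsum : ∑ i, x i ≤ (k : ℝ))
    (Ω : Type) [MeasurableSpace Ω] (μ : Measure Ω) [IsProbabilityMeasure μ]
    (B : Fin n → Ω → Fin m)
    (hmeas : ∀ i, Measurable (B i))
    (hindep : iIndepFun B μ)
    (hunif : ∀ (i : Fin n) (b : Fin m), μ {ω | B i ω = b} = 1 / (m : ℝ≥0∞))
    (b : Fin m) :
    μ {ω | (1 : ℝ) / 5 < ∑ i ∈ Finset.univ.filter (fun i => B i ω = b), x i}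
      ≤ 1 / (2 * (m : ℝ≥0∞) ^ 2) :=
  statement10_general k m n hm x hx hsum Ω μ B hmeas hindep hunif b
end

section
/- Let k ≥ 2 be an integer, m an integer with m ≥ 2¹¹·k⁴, λ := 1/(10·log₂ m + 5), and x ∈ ℝⁿ with λ < x_i ≤ 1/5 for all i and Σ_i x_i ≤ k. Assign each index i ∈ {1,…,n} independently and uniformly at random to one of m buckets. Then for each fixed bucket b, the probability that Σ_{i assigned to b} x_i > 3/5 is at most 1/(2m²). -/
open MeasureTheory ProbabilityTheory
open scoped ENNReal

/-!
A bucket of weight more than `3/5` contains at least four indices, since every weight is at most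
`1/5`. By independence and a union bound over the four-element sets of indices, this has
probability at most `C(n, 4) / m⁴`. Since every weight exceeds `1 / (10 log m + 5)`, we have
`n ≤ k (10 log m + 5)`, and `log m = O(m^{1/4})` together with `k⁴ ≤ m / 2¹¹` gives
`n⁴ ≤ 12 m²`, hence `C(n, 4) ≤ n⁴ / 24 ≤ m² / 2`.
-/

open Finset in
theorem ProbabilityTheory.iIndepFun.measure_le_card_filter_eq_le {ι Ω β : Type*} [Fintype ι]
    [MeasurableSpace Ω] {μ : Measure Ω} [MeasurableSpace β] [MeasurableSingletonClass β]
    [DecidableEq β] {B : ι → Ω → β} (hB : iIndepFun B μ) {b : β} {p : ℝ≥0∞}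
    (hp : ∀ i, μ {ω | B i ω = b} = p) (r : ℕ) :
    μ {ω | r ≤ #{i | B i ω = b}} ≤ (Fintype.card ι).choose r * p ^ r := by
  have hcover : {ω | r ≤ #{i | B i ω = b}} ⊆
      ⋃ S ∈ powersetCard r univ, ⋂ i ∈ S, {ω | B i ω = b} := by
    refine Set.ofPred_subset_ofPred.2 fun ω hω => ?_
    obtain ⟨S, hS, hcard⟩ := exists_subset_card_eq hω
    exact Set.mem_biUnion (mem_powersetCard.2 ⟨subset_univ S, hcard⟩)
      (Set.mem_iInter₂.2 fun i hi => (mem_filter.1 (hS hi)).2)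
  calc μ {ω | r ≤ #{i | B i ω = b}}
      ≤ μ (⋃ S ∈ powersetCard r univ, ⋂ i ∈ S, {ω | B i ω = b}) := measure_mono hcover
    _ ≤ ∑ S ∈ powersetCard r univ, μ (⋂ i ∈ S, {ω | B i ω = b}) :=
        measure_biUnion_finset_le _ _
    _ = ∑ _S ∈ powersetCard r (univ : Finset ι), p ^ r := by
        refine sum_congr rfl fun S hS => ?_
        rw [hB.meas_biInter (s := fun i => {ω | B i ω = b})
          fun i _ => ⟨{b}, measurableSet_singleton b, rfl⟩,
          prod_congr rfl fun i _ => hp i, prod_const, (mem_powersetCard.1 hS).2]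
    _ = (Fintype.card ι).choose r * p ^ r := by
        rw [sum_const, card_powersetCard, card_univ, nsmul_eq_mul]

lemma lt_card_of_mul_lt_sum {ι : Type*} {s : Finset ι} {x : ι → ℝ} {c : ℝ} {r : ℕ}
    (hc : 0 ≤ c) (hx : ∀ i ∈ s, x i ≤ c) (h : r * c < ∑ i ∈ s, x i) : r < s.card := by
  by_contra! hcard
  have hsum := Finset.sum_le_card_nsmul s x c hx
  rw [nsmul_eq_mul] at hsum
  have : (s.card : ℝ) * c ≤ r * c := by gcongr
  linarith

lemma card_mul_le_sum_of_lt {ι : Type*} (s : Finset ι) {x : ι → ℝ} {a : ℝ}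
    (ha : ∀ i ∈ s, a < x i) : (s.card : ℝ) * a ≤ ∑ i ∈ s, x i := by
  simpa using Finset.card_nsmul_le_sum s x a fun i hi => (ha i hi).le

-- Tight at `M = 2¹⁵`; the constant matters only through `155⁴ / 2²⁶ < 12`.
lemma ten_mul_logb_add_five_le {M : ℝ} (hM : 2 ^ 15 ≤ M) :
    10 * Real.logb 2 M + 5 ≤ 155 * (M / 2 ^ 15) ^ (1 / 4 : ℝ) := by
  set t := (M / 2 ^ 15) ^ (1 / 4 : ℝ)
  have hs : 1 ≤ M / 2 ^ 15 := by rwa [one_le_div (by norm_num)]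
  have ht : 1 ≤ t := Real.one_le_rpow hs (by norm_num)
  have ht4 : t ^ 4 = M / 2 ^ 15 := by
    rw [← Real.rpow_natCast, ← Real.rpow_mul (by positivity)]
    norm_num
  have hlogb : Real.logb 2 M = 15 + 4 * Real.logb 2 t := by
    rw [show M = 2 ^ 15 * t ^ 4 by rw [ht4]; field_simp,
      Real.logb_mul (by norm_num) (by positivity), Real.logb_pow, Real.logb_pow,
      Real.logb_self_eq_one one_lt_two]
    push_cast
    ring
  have hlog : Real.logb 2 t ≤ 2 * (t - 1) := by
    rw [Real.logb, div_le_iff₀ (Real.log_pos one_lt_two)]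
    nlinarith [Real.log_le_sub_one_of_pos (by positivity : 0 < t), Real.log_two_gt_d9]
  linarith

lemma two_pow_fifteen_le {k m : ℕ} (hk : 2 ≤ k) (hm : 2 ^ 11 * k ^ 4 ≤ m) : 2 ^ 15 ≤ m :=
  calc 2 ^ 15 = 2 ^ 11 * 2 ^ 4 := by norm_num
    _ ≤ 2 ^ 11 * k ^ 4 := by gcongr
    _ ≤ m := hm

lemma two_mul_choose_four_le_sq {k m n : ℕ} (hk : 2 ≤ k) (hm : 2 ^ 11 * k ^ 4 ≤ m)
    (hn : (n : ℝ) ≤ k * (10 * Real.logb 2 m + 5)) : 2 * n.choose 4 ≤ m ^ 2 := by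
  have hmR : (2 : ℝ) ^ 11 * k ^ 4 ≤ m := by exact_mod_cast hm
  have hm15 : (2 : ℝ) ^ 15 ≤ m := by exact_mod_cast two_pow_fifteen_le hk hm
  set t := ((m : ℝ) / 2 ^ 15) ^ (1 / 4 : ℝ)
  have ht4 : t ^ 4 = (m : ℝ) / 2 ^ 15 := by
    rw [← Real.rpow_natCast, ← Real.rpow_mul (by positivity)]
    norm_num
  have hnt : (n : ℝ) ^ 4 ≤ ((k : ℝ) * (155 * t)) ^ 4 :=
    pow_le_pow_left₀ (by positivity) (hn.trans (by gcongr; exact ten_mul_logb_add_five_le hm15)) 4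
  have hn4 : (n : ℝ) ^ 4 ≤ 12 * (m : ℝ) ^ 2 := by
    rw [mul_pow, mul_pow, ht4] at hnt
    nlinarith
  have hchoose : (n.choose 4 : ℝ) ≤ (n : ℝ) ^ 4 / 24 := Nat.choose_le_pow_div 4 n
  exact_mod_cast (by linarith : (2 : ℝ) * n.choose 4 ≤ (m : ℝ) ^ 2)

lemma ENNReal.natCast_mul_one_div_pow_four_le {c m : ℕ} (h : 2 * c ≤ m ^ 2) :
    (c : ℝ≥0∞) * (1 / (m : ℝ≥0∞)) ^ 4 ≤ 1 / (2 * (m : ℝ≥0∞) ^ 2) := by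
  rcases Nat.eq_zero_or_pos m with rfl | hm
  · simp
  have h' : 2 * (c : ℝ≥0∞) ≤ (m : ℝ≥0∞) ^ 2 := by exact_mod_cast h
  set M : ℝ≥0∞ := (m : ℝ≥0∞)
  rw [one_div, one_div, ← ENNReal.inv_pow, ENNReal.le_inv_iff_mul_le,
    show M ^ 4 = M ^ 2 * M ^ 2 by ring]
  calc (c : ℝ≥0∞) * (M ^ 2 * M ^ 2)⁻¹ * (2 * M ^ 2)
      = 2 * c * M ^ 2 * (M ^ 2 * M ^ 2)⁻¹ := by ring
    _ ≤ M ^ 2 * M ^ 2 * (M ^ 2 * M ^ 2)⁻¹ := by gcongr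
    _ = 1 := ENNReal.mul_inv_cancel (by positivity) (by finiteness)

theorem statement11_general (k m n : ℕ) (hk : 2 ≤ k) (hm : 2 ^ 11 * k ^ 4 ≤ m)
    (x : Fin n → ℝ)
    (hx : ∀ i, 1 / (10 * Real.logb 2 m + 5) < x i ∧ x i ≤ 1 / 5)
    (hsum : ∑ i, x i ≤ (k : ℝ))
    (Ω : Type) [MeasurableSpace Ω] (μ : Measure Ω)
    (B : Fin n → Ω → Fin m)
    (hindep : iIndepFun B μ)
    (hunif : ∀ (i : Fin n) (b : Fin m), μ {ω | B i ω = b} = 1 / (m : ℝ≥0∞))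
    (b : Fin m) :
    μ {ω | (3 : ℝ) / 5 < ∑ i ∈ Finset.univ.filter (fun i => B i ω = b), x i}
      ≤ 1 / (2 * (m : ℝ≥0∞) ^ 2) := by
  have hm1 : (1 : ℝ) ≤ m := by
    exact_mod_cast Nat.one_le_two_pow.trans (two_pow_fifteen_le hk hm)
  have hlog : 0 < 10 * Real.logb 2 m + 5 := by
    have := Real.logb_nonneg one_lt_two hm1
    linarith
  have hn : (n : ℝ) ≤ k * (10 * Real.logb 2 m + 5) := by
    have := (card_mul_le_sum_of_lt Finset.univ fun i _ => (hx i).1).trans hsum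
    rwa [Finset.card_univ, Fintype.card_fin, mul_one_div, div_le_iff₀ hlog] at this
  have hfour : {ω | (3 : ℝ) / 5 < ∑ i ∈ Finset.univ.filter (fun i => B i ω = b), x i} ⊆
      {ω | 4 ≤ (Finset.univ.filter (fun i => B i ω = b)).card} := by
    refine Set.ofPred_subset_ofPred.2 fun ω hω => ?_
    exact lt_card_of_mul_lt_sum (r := 3) (by norm_num) (fun i _ => (hx i).2) (by linarith)
  calc μ {ω | (3 : ℝ) / 5 < ∑ i ∈ Finset.univ.filter (fun i => B i ω = b), x i}
      ≤ μ {ω | 4 ≤ (Finset.univ.filter (fun i => B i ω = b)).card} := measure_mono hfour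
    _ ≤ (n.choose 4 : ℝ≥0∞) * (1 / (m : ℝ≥0∞)) ^ 4 := by
        simpa using hindep.measure_le_card_filter_eq_le (hunif · b) 4
    _ ≤ 1 / (2 * (m : ℝ≥0∞) ^ 2) :=
        ENNReal.natCast_mul_one_div_pow_four_le (two_mul_choose_four_le_sq hk hm hn)

/-- Let `k ≥ 2`, `m ≥ 2¹¹·k⁴`, `λ := 1/(10·log₂ m + 5)`, and `x ∈ ℝⁿ` with
`λ < x_i ≤ 1/5` for all `i` and `∑ x_i ≤ k`. Assign each index `i` independently and
uniformly at random to one of `m` buckets. Then for each fixed bucket `b`, the probability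
that the total `x`-weight of bucket `b` exceeds `3/5` is at most `1/(2m²)`. -/
theorem statement11 (k m n : ℕ) (hk : 2 ≤ k) (hm : 2 ^ 11 * k ^ 4 ≤ m)
    (x : Fin n → ℝ)
    (hx : ∀ i, 1 / (10 * Real.logb 2 m + 5) < x i ∧ x i ≤ 1 / 5)
    (hsum : ∑ i, x i ≤ (k : ℝ))
    (Ω : Type) [MeasurableSpace Ω] (μ : Measure Ω) [IsProbabilityMeasure μ]
    (B : Fin n → Ω → Fin m)
    (hmeas : ∀ i, Measurable (B i))
    (hindep : iIndepFun B μ)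
    (hunif : ∀ (i : Fin n) (b : Fin m), μ {ω | B i ω = b} = 1 / (m : ℝ≥0∞))
    (b : Fin m) :
    μ {ω | (3 : ℝ) / 5 < ∑ i ∈ Finset.univ.filter (fun i => B i ω = b), x i}
      ≤ 1 / (2 * (m : ℝ≥0∞) ^ 2) :=
  statement11_general k m n hk hm x hx hsum Ω μ B hindep hunif b
end

section
/- Let E be a finite set and f : 2^E → ℝ≥0 a monotone submodular function. Then for every x ∈ [0,1]^E: F(x) ≥ F((1 − e^{−x_i})_{i∈E}) ≥ (1 − 1/e)·f*(x), where F is the multilinear extension of f and f* is its coverage extension. -/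
/-- `f : 2^E → ℝ` is submodular: `f(S∪{e}) − f(S) ≥ f(T∪{e}) − f(T)` for all
`S ⊆ T` and `e ∉ T`. -/
def Submodular {E : Type} [DecidableEq E] (f : Finset E → ℝ) : Prop :=
  ∀ S T : Finset E, S ⊆ T → ∀ e ∉ T,
    f (insert e T) - f T ≤ f (insert e S) - f S

/-- The multilinear extension `F(x) = ∑_{S⊆E} f(S) ∏_{i∈S} x_i ∏_{i∉S} (1−x_i)`. -/
noncomputable def multilinear {E : Type} [Fintype E] [DecidableEq E]
    (f : Finset E → ℝ) (x : E → ℝ) : ℝ :=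
  ∑ S : Finset E, f S * (∏ i ∈ S, x i) * ∏ i ∈ Sᶜ, (1 - x i)

/-- The coverage extension `f*(x) = min_{S⊆E} ( f(S) + ∑_{i∈E} (f(S∪{i}) − f(S))·x_i )`. -/
noncomputable def coverageExt {E : Type} [Fintype E] [DecidableEq E]
    (f : Finset E → ℝ) (x : E → ℝ) : ℝ :=
  Finset.univ.inf' Finset.univ_nonempty
    (fun S : Finset E => f S + ∑ i, (f (insert i S) - f S) * x i)

/-!
Write `F(y) = ∑_S f(S) w_y(S)`, where `w_y` is the law of the independent rounding of `y`.
Along a differentiable path `y(t)`,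
`d/dt F(y(t)) = ∑_S ∑_{i ∉ S} (f(S ∪ {i}) − f(S)) y_i' ∏_{j ∈ S} y_j ∏_{j ∉ S ∪ {i}} (1 − y_j)`.
On the segment from `1 − e^{−x}` to `x` this is nonnegative, because `f` is monotone and
`1 − e^{−x_i} ≤ x_i`. For `y(t) = 1 − e^{−t x}` one has `y_i' = x_i (1 − y_i)`, so `G(t) = F(y(t))`
satisfies `G + G' = 𝔼_{S ∼ w_{y(t)}} [f(S) + ∑_i (f(S ∪ {i}) − f(S)) x_i] ≥ f*(x)`. Hence
`e^t (G(t) − f*(x))` is nondecreasing, and comparing `t = 0`, where `G(0) = f(∅) ≥ 0`, with `t = 1`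
gives `G(1) ≥ (1 − 1/e) f*(x)`.
-/

open Finset

theorem le_of_hasDerivAt_nonneg_on_Icc {g g' : ℝ → ℝ} {a b : ℝ} (hab : a ≤ b)
    (hg : ∀ t, HasDerivAt g (g' t) t) (hg' : ∀ t ∈ Set.Icc a b, 0 ≤ g' t) : g a ≤ g b :=
  monotoneOn_of_hasDerivWithinAt_nonneg (convex_Icc a b)
    (fun t _ => (hg t).continuousAt.continuousWithinAt) (fun t _ => (hg t).hasDerivWithinAt)
    (fun t ht => hg' t (interior_subset ht)) ⟨le_rfl, hab⟩ ⟨hab, le_rfl⟩ hab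

theorem exp_mul_sub_const_le_of_le_add_deriv {g g' : ℝ → ℝ} {a b c : ℝ} (hab : a ≤ b)
    (hg : ∀ t, HasDerivAt g (g' t) t) (h : ∀ t ∈ Set.Icc a b, c ≤ g t + g' t) :
    Real.exp a * (g a - c) ≤ Real.exp b * (g b - c) :=
  le_of_hasDerivAt_nonneg_on_Icc hab (fun t => (Real.hasDerivAt_exp t).mul ((hg t).sub_const c))
    fun t ht => by nlinarith [mul_nonneg (Real.exp_pos t).le (sub_nonneg.2 (h t ht))]

theorem one_sub_exp_neg_mem_Icc {u : ℝ} (hu : 0 ≤ u) : 1 - Real.exp (-u) ∈ Set.Icc 0 1 :=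
  ⟨sub_nonneg.2 (Real.exp_le_one_iff.2 (neg_nonpos.2 hu)), sub_le_self _ (Real.exp_pos _).le⟩

theorem prod_mul_prod_one_sub_nonneg {ι : Type*} {y : ι → ℝ} (hy : ∀ i, y i ∈ Set.Icc 0 1)
    (A B : Finset ι) : 0 ≤ (∏ i ∈ A, y i) * ∏ i ∈ B, (1 - y i) :=
  mul_nonneg (prod_nonneg fun i _ => (hy i).1) (prod_nonneg fun i _ => sub_nonneg.2 (hy i).2)

section

variable {E : Type} [Fintype E] [DecidableEq E]

theorem sum_sum_mem_eq_sum_sum_compl_insert {M : Type*} [AddCommMonoid M]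
    (F : Finset E → E → M) :
    ∑ S, ∑ i ∈ S, F S i = ∑ S, ∑ i ∈ Sᶜ, F (insert i S) i := calc
  _ = ∑ p ∈ univ.sigma fun S : Finset E => S, F p.1 p.2 := sum_sigma' _ _ _
  _ = ∑ p ∈ univ.sigma fun S : Finset E => Sᶜ, F (insert p.2 p.1) p.2 :=
    sum_nbij' (fun p => ⟨p.1.erase p.2, p.2⟩) (fun p => ⟨insert p.2 p.1, p.2⟩)
      (by simp) (by simp) (by simp +contextual [insert_erase]) (by simp +contextual)
      (by simp +contextual [insert_erase])
  _ = _ := (sum_sigma' _ _ fun S i => F (insert i S) i).symm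

theorem sum_compl_sub_mul_eq_sum (f : Finset E → ℝ) (x : E → ℝ) (S : Finset E) :
    ∑ i ∈ Sᶜ, (f (insert i S) - f S) * x i = ∑ i, (f (insert i S) - f S) * x i :=
  sum_subset (subset_univ _) fun i _ hi => by
    rw [insert_eq_of_mem (notMem_compl.1 hi), sub_self, zero_mul]

def roundingWeight (y : E → ℝ) (S : Finset E) : ℝ :=
  (∏ i ∈ S, y i) * ∏ i ∈ Sᶜ, (1 - y i)

theorem multilinear_eq_sum_roundingWeight (f : Finset E → ℝ) (y : E → ℝ) :
    multilinear f y = ∑ S, f S * roundingWeight y S := by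
  simp only [multilinear, roundingWeight, mul_assoc]

theorem sum_roundingWeight (y : E → ℝ) : ∑ S, roundingWeight y S = 1 := by
  simpa [roundingWeight, ← compl_eq_univ_sdiff] using (prod_add y (fun i => 1 - y i) univ).symm

theorem multilinear_zero (f : Finset E → ℝ) : multilinear f 0 = f ∅ := by
  rw [multilinear, sum_eq_single ∅] <;> simp +contextual

theorem hasDerivAt_multilinear_comp (f : Finset E → ℝ) {y : ℝ → E → ℝ} {y' : E → ℝ} {t : ℝ}
    (hy : ∀ i, HasDerivAt (fun s => y s i) (y' i) t) :
    HasDerivAt (fun s => multilinear f (y s))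
      (∑ S, ∑ i ∈ Sᶜ, (f (insert i S) - f S) *
        (y' i * ((∏ j ∈ S, y t j) * ∏ j ∈ Sᶜ.erase i, (1 - y t j)))) t := by
  have hterm (S : Finset E) := ((HasDerivAt.fun_finsetProd (u := S) fun i _ => hy i).mul
    (HasDerivAt.fun_finsetProd (u := Sᶜ) fun i _ => (hy i).const_sub 1)).const_mul (f S)
  have hfun : (fun s => multilinear f (y s)) =
      fun s => ∑ S, f S * ((∏ i ∈ S, y s i) * ∏ i ∈ Sᶜ, (1 - y s i)) := by
    ext s; simp only [multilinear, mul_assoc]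
  rw [hfun]
  refine (HasDerivAt.fun_sum (u := univ) fun S _ => hterm S).congr_deriv ?_
  symm
  calc _ = ∑ S, ∑ i ∈ Sᶜ, f (insert i S) *
          (y' i * ((∏ j ∈ S, y t j) * ∏ j ∈ Sᶜ.erase i, (1 - y t j)))
        - ∑ S, ∑ i ∈ Sᶜ, f S * (y' i * ((∏ j ∈ S, y t j) * ∏ j ∈ Sᶜ.erase i, (1 - y t j))) := by
        simp only [sub_mul, sum_sub_distrib]
    _ = ∑ S, ∑ i ∈ S, f S * (y' i * ((∏ j ∈ S.erase i, y t j) * ∏ j ∈ Sᶜ, (1 - y t j)))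
        - ∑ S, ∑ i ∈ Sᶜ, f S * (y' i * ((∏ j ∈ S, y t j) * ∏ j ∈ Sᶜ.erase i, (1 - y t j))) := by
        rw [sum_sum_mem_eq_sum_sum_compl_insert]
        congr 1
        refine sum_congr rfl fun S _ => sum_congr rfl fun i hi => ?_
        rw [erase_insert (mem_compl.1 hi), compl_insert]
    _ = _ := by
        rw [← sum_sub_distrib]
        refine sum_congr rfl fun S _ => ?_
        rw [sum_mul, mul_sum, mul_add, mul_sum, mul_sum, sub_eq_add_neg, ← sum_neg_distrib]
        congr 1 <;> exact sum_congr rfl fun i _ => by simp only [smul_eq_mul]; ring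

theorem multilinear_mono {f : Finset E → ℝ} (hf : Monotone f) {y x : E → ℝ}
    (hy : ∀ i, 0 ≤ y i) (hyx : y ≤ x) (hx : ∀ i, x i ≤ 1) :
    multilinear f y ≤ multilinear f x := by
  set p : ℝ → E → ℝ := fun t i => y i + t * (x i - y i)
  have hp (t : ℝ) (ht : t ∈ Set.Icc 0 1) (i : E) : p t i ∈ Set.Icc 0 1 := by
    have := mul_nonneg ht.1 (sub_nonneg.2 (hyx i))
    have := mul_le_of_le_one_left (sub_nonneg.2 (hyx i)) ht.2
    constructor <;> linarith [hy i, hx i]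
  have hderiv (t : ℝ) := hasDerivAt_multilinear_comp f (y := p) (t := t) fun i =>
    (hasDerivAt_mul_const (x i - y i)).const_add (y i)
  simpa [p] using le_of_hasDerivAt_nonneg_on_Icc zero_le_one hderiv fun t ht =>
    sum_nonneg fun S _ => sum_nonneg fun i _ =>
      mul_nonneg (sub_nonneg.2 (hf (subset_insert i S)))
        (mul_nonneg (sub_nonneg.2 (hyx i)) (prod_mul_prod_one_sub_nonneg (hp t ht) _ _))

theorem hasDerivAt_multilinear_one_sub_exp (f : Finset E → ℝ) (x : E → ℝ) (t : ℝ) :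
    HasDerivAt (fun s => multilinear f fun i => 1 - Real.exp (-(s * x i)))
      (∑ S, roundingWeight (fun i => 1 - Real.exp (-(t * x i))) S *
        ∑ i ∈ Sᶜ, (f (insert i S) - f S) * x i) t := by
  have hexp (i : E) :
      HasDerivAt (fun s => 1 - Real.exp (-(s * x i))) (x i * Real.exp (-(t * x i))) t :=
    ((hasDerivAt_mul_const (x i)).fun_neg.exp.const_sub 1).congr_deriv (by ring)
  refine (hasDerivAt_multilinear_comp f hexp).congr_deriv (sum_congr rfl fun S _ => ?_)
  rw [roundingWeight, mul_sum]
  refine sum_congr rfl fun i hi => ?_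
  simp only [sub_sub_cancel]
  rw [← mul_prod_erase Sᶜ (fun j => Real.exp (-(t * x j))) hi]
  ring

theorem coverageExt_le_sum_roundingWeight (f : Finset E → ℝ) (x : E → ℝ) {y : E → ℝ}
    (hy : ∀ i, y i ∈ Set.Icc 0 1) :
    coverageExt f x ≤
      ∑ S, roundingWeight y S * (f S + ∑ i ∈ Sᶜ, (f (insert i S) - f S) * x i) := calc
  coverageExt f x = ∑ S, roundingWeight y S * coverageExt f x := by
    rw [← sum_mul, sum_roundingWeight, one_mul]
  _ ≤ _ := sum_le_sum fun S _ => mul_le_mul_of_nonneg_left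
    (by rw [sum_compl_sub_mul_eq_sum]; exact inf'_le _ (mem_univ S))
    (prod_mul_prod_one_sub_nonneg hy _ _)

theorem one_sub_inv_exp_mul_coverageExt_le {f : Finset E → ℝ} (hf0 : 0 ≤ f ∅) {x : E → ℝ}
    (hx : ∀ i, 0 ≤ x i) :
    (1 - 1 / Real.exp 1) * coverageExt f x ≤ multilinear f fun i => 1 - Real.exp (-x i) := by
  have hgrowth := exp_mul_sub_const_le_of_le_add_deriv (c := coverageExt f x) zero_le_one
    (hasDerivAt_multilinear_one_sub_exp f x) fun t ht => by
      rw [multilinear_eq_sum_roundingWeight, ← sum_add_distrib]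
      exact (coverageExt_le_sum_roundingWeight f x
        fun i => one_sub_exp_neg_mem_Icc (mul_nonneg ht.1 (hx i))).trans_eq
        (sum_congr rfl fun S _ => by ring)
  have h0 : (fun i => 1 - Real.exp (-(0 * x i))) = 0 := by ext; simp
  simp only [h0, multilinear_zero, one_mul, Real.exp_zero] at hgrowth
  have he := Real.exp_pos 1
  rw [one_sub_div he.ne', div_mul_eq_mul_div, div_le_iff₀ he]
  linarith

end

theorem statement12_general {E : Type} [Fintype E] [DecidableEq E]
    (f : Finset E → ℝ) (hf0 : ∀ S, 0 ≤ f S)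
    (hmono : ∀ S T : Finset E, S ⊆ T → f S ≤ f T)
    (x : E → ℝ) (hx : ∀ i, 0 ≤ x i ∧ x i ≤ 1) :
    multilinear f (fun i => 1 - Real.exp (-x i)) ≤ multilinear f x ∧
    (1 - 1 / Real.exp 1) * coverageExt f x ≤
      multilinear f (fun i => 1 - Real.exp (-x i)) := by
  refine ⟨multilinear_mono hmono
    (fun i => (one_sub_exp_neg_mem_Icc (hx i).1).1) (fun i => ?_) (fun i => (hx i).2),
    one_sub_inv_exp_mul_coverageExt_le (hf0 ∅) fun i => (hx i).1⟩
  linarith [Real.add_one_le_exp (-x i)]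

/-- For a monotone submodular `f : 2^E → ℝ≥0` and every `x ∈ [0,1]^E`,
`F(x) ≥ F(1 − e^{−x}) ≥ (1 − 1/e)·f*(x)`. -/
theorem statement12 {E : Type} [Fintype E] [DecidableEq E]
    (f : Finset E → ℝ) (hf0 : ∀ S, 0 ≤ f S)
    (hsub : Submodular f)
    (hmono : ∀ S T : Finset E, S ⊆ T → f S ≤ f T)
    (x : E → ℝ) (hx : ∀ i, 0 ≤ x i ∧ x i ≤ 1) :
    multilinear f (fun i => 1 - Real.exp (-x i)) ≤ multilinear f x ∧
    (1 - 1 / Real.exp 1) * coverageExt f x ≤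
      multilinear f (fun i => 1 - Real.exp (-x i)) :=
  statement12_general f hf0 hmono x hx
end

section
/- Let X = (X_1, …, X_n) be a random vector with values in {0,1}^n that is negatively associated. Then for every submodular function f : 2^{{1,…,n}} → ℝ one has E[f({i : X_i = 1})] ≥ F(E[X_1], …, E[X_n]), where F is the multilinear extension of f. -/
open MeasureTheory

/-- `f` depends only on the coordinates in `S`. -/
def DependsOnCoords {n : ℕ} (f : (Fin n → ℝ) → ℝ) (S : Finset (Fin n)) : Prop :=
  ∀ x y : Fin n → ℝ, (∀ i ∈ S, x i = y i) → f x = f y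

/-- The random vector `X` is negatively associated: every two coordinatewise-nondecreasing
functions of disjoint sets of coordinates have nonpositive covariance, i.e.
`E[f·g] ≤ E[f]·E[g]`. -/
def NegAssoc {n : ℕ} {Ω : Type} [MeasurableSpace Ω] (μ : Measure Ω)
    (X : Fin n → Ω → ℝ) : Prop :=
  ∀ (f g : (Fin n → ℝ) → ℝ) (S T : Finset (Fin n)),
    Monotone f → Monotone g → Disjoint S T →
    DependsOnCoords f S → DependsOnCoords g T →
    ∫ ω, f (fun i => X i ω) * g (fun i => X i ω) ∂μ ≤
      (∫ ω, f (fun i => X i ω) ∂μ) * ∫ ω, g (fun i => X i ω) ∂μ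

/-!
Write `p` for the vector of means and `S` for the random set `{i : X_i = 1}`. Replacing the
coordinates of `S` in a set `A` by independent Bernoulli(`p_i`) coins gives the partial
extension `Φ_A(S)`, with `Φ_∅(S) = f(S)` and `Φ_univ(S) = F(p)`. Adding a coordinate `i ∉ A`
changes it by `Φ_A(S) - Φ_{A ∪ {i}}(S) = (X_i - p_i) · D(S)`, where the discrete derivative `D`
depends only on the coordinates outside `A ∪ {i}` and, by submodularity, is antitone. Negative
association applied to `X_i` and `-D` gives `E[X_i D] ≥ p_i E[D]`, so `E[Φ_A(S)]` decreases as
`A` grows from `∅` to `univ`.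
-/

open Finset

section PartialMultilinear

variable {E : Type} [DecidableEq E] (f : Finset E → ℝ) (p : E → ℝ)

/-- The multilinear extension in the coordinates in `A` only, those outside `A` being fixed to
the indicator of `T`. -/
noncomputable def partialMultilinear (A T : Finset E) : ℝ :=
  ∑ S ∈ A.powerset, f (S ∪ (T \ A)) * ((∏ i ∈ S, p i) * ∏ i ∈ A \ S, (1 - p i))

noncomputable def partialMultilinearDeriv (A : Finset E) (i : E) (T : Finset E) : ℝ :=
  partialMultilinear f p A (insert i T) - partialMultilinear f p A (T.erase i)

theorem partialMultilinear_empty (T : Finset E) : partialMultilinear f p ∅ T = f T := by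
  simp [partialMultilinear]

theorem partialMultilinear_univ [Fintype E] (T : Finset E) :
    partialMultilinear f p univ T = multilinear f p := by
  simp only [partialMultilinear, multilinear, powerset_univ,
    sdiff_eq_empty_iff_subset.mpr (subset_univ T), union_empty, ← compl_eq_univ_sdiff, mul_assoc]

variable {f p}

theorem partialMultilinear_insert {A : Finset E} {i : E} (hi : i ∉ A) (T : Finset E) :
    partialMultilinear f p (insert i A) T =
      p i * partialMultilinear f p A (insert i T) +
        (1 - p i) * partialMultilinear f p A (T.erase i) := by
  rw [partialMultilinear, sum_powerset_insert hi, add_comm, partialMultilinear,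
    partialMultilinear, mul_sum, mul_sum]
  congr 1 <;> refine sum_congr rfl fun S hS => ?_ <;>
    have hiS : i ∉ S := fun h => hi (mem_powerset.1 hS h)
  · have hset : insert i S ∪ (T \ insert i A) = S ∪ (insert i T \ A) := by grind
    have hcompl : insert i A \ insert i S = A \ S := by grind
    rw [hset, hcompl, prod_insert hiS]
    ring
  · have hset : T \ insert i A = T.erase i \ A := by grind
    have hcompl : insert i A \ S = insert i (A \ S) := by grind
    rw [hset, hcompl, prod_insert (by grind)]
    ring

theorem partialMultilinear_sub_insert {A : Finset E} {i : E} (hi : i ∉ A) (T : Finset E) :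
    partialMultilinear f p A T - partialMultilinear f p (insert i A) T =
      ((if i ∈ T then 1 else 0) - p i) * partialMultilinearDeriv f p A i T := by
  rw [partialMultilinear_insert hi, partialMultilinearDeriv]
  split_ifs with hiT
  · rw [insert_eq_of_mem hiT]; ring
  · rw [erase_eq_of_notMem hiT]; ring

theorem partialMultilinearDeriv_eq_sum {A : Finset E} {i : E} (hi : i ∉ A) (T : Finset E) :
    partialMultilinearDeriv f p A i T =
      ∑ S ∈ A.powerset, (f (insert i (S ∪ (T \ insert i A))) - f (S ∪ (T \ insert i A))) *
        ((∏ j ∈ S, p j) * ∏ j ∈ A \ S, (1 - p j)) := by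
  rw [partialMultilinearDeriv, partialMultilinear, partialMultilinear, ← sum_sub_distrib]
  refine sum_congr rfl fun S hS => ?_
  have hiS : i ∉ S := fun h => hi (mem_powerset.1 hS h)
  have hins : S ∪ (insert i T \ A) = insert i (S ∪ (T \ insert i A)) := by grind
  have hera : S ∪ (T.erase i \ A) = S ∪ (T \ insert i A) := by grind
  rw [hins, hera]
  ring

theorem partialMultilinearDeriv_congr {A : Finset E} {i : E} (hi : i ∉ A) {T T' : Finset E}
    (h : T \ insert i A = T' \ insert i A) :
    partialMultilinearDeriv f p A i T = partialMultilinearDeriv f p A i T' := by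
  rw [partialMultilinearDeriv_eq_sum hi, partialMultilinearDeriv_eq_sum hi, h]

theorem partialMultilinearDeriv_antitone (hf : Submodular f) (hp : ∀ j, p j ∈ Set.Icc 0 1)
    {A : Finset E} {i : E} (hi : i ∉ A) : Antitone (partialMultilinearDeriv f p A i) := by
  intro T T' hTT'
  rw [partialMultilinearDeriv_eq_sum hi, partialMultilinearDeriv_eq_sum hi]
  refine sum_le_sum fun S hS => mul_le_mul_of_nonneg_right ?_ ?_
  · refine hf _ _ (union_subset_union_right (sdiff_subset_sdiff hTT' le_rfl)) i ?_
    have hiS : i ∉ S := fun h => hi (mem_powerset.1 hS h)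
    grind
  · exact mul_nonneg (prod_nonneg fun j _ => (hp j).1)
      (prod_nonneg fun j _ => sub_nonneg.2 (hp j).2)

end PartialMultilinear

section NegativeAssociation

variable {n : ℕ} {Ω : Type} [MeasurableSpace Ω] {μ : Measure Ω} {X : Fin n → Ω → ℝ}

theorem NegAssoc.integral_mul_integral_le_of_antitone (hNA : NegAssoc μ X)
    {h : (Fin n → ℝ) → ℝ} (hh : Antitone h) {i : Fin n} {T : Finset (Fin n)} (hiT : i ∉ T)
    (hT : DependsOnCoords h T) :
    (∫ ω, X i ω ∂μ) * ∫ ω, h (fun j => X j ω) ∂μ ≤ ∫ ω, X i ω * h (fun j => X j ω) ∂μ := by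
  have hcov := hNA (fun x => x i) (fun x => -h x) {i} T (fun x y hxy => hxy i)
    (fun x y hxy => neg_le_neg (hh hxy)) (disjoint_singleton_left.2 hiT)
    (fun x y hxy => hxy i (mem_singleton_self i)) (fun x y hxy => congrArg Neg.neg (hT x y hxy))
  simp only [mul_neg, integral_neg] at hcov
  linarith

theorem integrable_comp_filter_eq_one [IsFiniteMeasure μ] (hX : ∀ i, Measurable (X i))
    (ρ : Finset (Fin n) → ℝ) :
    Integrable (fun ω => ρ (univ.filter fun i => X i ω = 1)) μ := by
  let _ : MeasurableSpace (Finset (Fin n)) := ⊤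
  have hS : Measurable fun ω => univ.filter fun i => X i ω = 1 := by
    refine measurable_to_countable' fun T => ?_
    have hpre : (fun ω => univ.filter fun i => X i ω = 1) ⁻¹' {T} =
        ⋂ i, {ω | X i ω = 1 ↔ i ∈ T} := by
      ext ω
      simp [Finset.ext_iff]
    rw [hpre]
    exact MeasurableSet.iInter fun i =>
      (hX i (measurableSet_singleton 1)).iff (MeasurableSet.const (i ∈ T))
  exact Integrable.of_finite.comp_measurable hS

end NegativeAssociation

section SubmodularDominance

variable {n : ℕ} {Ω : Type} [MeasurableSpace Ω] {μ : Measure Ω} [IsProbabilityMeasure μ]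
  {X : Fin n → Ω → ℝ}

theorem integral_mem_Icc_of_zero_or_one {Y : Ω → ℝ} (h01 : ∀ ω, Y ω = 0 ∨ Y ω = 1) :
    ∫ ω, Y ω ∂μ ∈ Set.Icc 0 1 := by
  have hnorm : ‖∫ ω, Y ω ∂μ‖ ≤ 1 := by
    simpa using norm_integral_le_of_norm_le_const (μ := μ) (f := Y) (C := 1)
      (ae_of_all _ fun ω => by rcases h01 ω with h | h <;> simp [h])
  exact ⟨integral_nonneg fun ω => by rcases h01 ω with h | h <;> simp [h],
    (le_abs_self _).trans hnorm⟩

theorem integral_partialMultilinear_insert_le (hX : ∀ i, Measurable (X i))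
    (h01 : ∀ i ω, X i ω = 0 ∨ X i ω = 1) (hNA : NegAssoc μ X) {f : Finset (Fin n) → ℝ}
    (hf : Submodular f) {A : Finset (Fin n)} {i : Fin n} (hi : i ∉ A) :
    ∫ ω, partialMultilinear f (fun j => ∫ ω, X j ω ∂μ) (insert i A)
        (univ.filter fun j => X j ω = 1) ∂μ ≤
      ∫ ω, partialMultilinear f (fun j => ∫ ω, X j ω ∂μ) A (univ.filter fun j => X j ω = 1) ∂μ := by
  set p : Fin n → ℝ := fun j => ∫ ω, X j ω ∂μ
  set S : Ω → Finset (Fin n) := fun ω => univ.filter fun j => X j ω = 1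
  set D := partialMultilinearDeriv f p A i
  have hD : Antitone D := partialMultilinearDeriv_antitone hf
    (fun j => integral_mem_Icc_of_zero_or_one (h01 j)) hi
  have hXS : ∀ ω, X i ω = if i ∈ S ω then 1 else 0 := fun ω => by
    rcases h01 i ω with h | h <;> simp [S, h]
  have hthreshold : ∀ ω, univ.filter (fun j => 1 ≤ X j ω) = S ω := fun ω =>
    filter_congr fun j _ => by rcases h01 j ω with h | h <;> norm_num [h]
  -- `D` is read off the coordinates through the threshold `1 ≤ x j`, which is monotone in `x`.
  have hcov : p i * ∫ ω, D (S ω) ∂μ ≤ ∫ ω, X i ω * D (S ω) ∂μ := by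
    have := hNA.integral_mul_integral_le_of_antitone
      (h := fun x => D (univ.filter fun j => 1 ≤ x j))
      (fun x y hxy => hD fun j => by simpa using fun h => h.trans (hxy j))
      (i := i) (T := (insert i A)ᶜ) (by simp)
      (fun x y hxy => partialMultilinearDeriv_congr hi <| by
        ext j
        by_cases hj : j ∈ insert i A
        · simp [hj]
        · simp [hj, hxy j (mem_compl.2 hj)])
    simpa only [hthreshold] using this
  have hdiff : ∫ ω, partialMultilinear f p A (S ω) ∂μ -
        ∫ ω, partialMultilinear f p (insert i A) (S ω) ∂μ =
      ∫ ω, X i ω * D (S ω) ∂μ - p i * ∫ ω, D (S ω) ∂μ := by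
    have hXD : Integrable (fun ω => X i ω * D (S ω)) μ :=
      (integrable_comp_filter_eq_one hX fun T => (if i ∈ T then 1 else 0) * D T).congr
        (ae_of_all _ fun ω => by beta_reduce; rw [hXS ω])
    rw [← integral_sub (integrable_comp_filter_eq_one hX _) (integrable_comp_filter_eq_one hX _),
      ← integral_const_mul,
      ← integral_sub hXD ((integrable_comp_filter_eq_one hX _).const_mul (p i))]
    refine integral_congr_ae (ae_of_all _ fun ω => ?_)
    simp only [partialMultilinear_sub_insert hi, hXS ω, D]
    ring
  linarith

end SubmodularDominance

/-- A negatively associated `{0,1}`-valued random vector satisfies submodular dominance: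
`E[f({i : X_i = 1})] ≥ F(E[X_1], …, E[X_n])` for every submodular `f`. -/
theorem statement14 (n : ℕ)
    (Ω : Type) [MeasurableSpace Ω] (μ : Measure Ω) [IsProbabilityMeasure μ]
    (X : Fin n → Ω → ℝ) (hmeas : ∀ i, Measurable (X i))
    (h01 : ∀ i ω, X i ω = 0 ∨ X i ω = 1)
    (hNA : NegAssoc μ X)
    (f : Finset (Fin n) → ℝ) (hf : Submodular f) :
    multilinear f (fun i => ∫ ω, X i ω ∂μ) ≤
      ∫ ω, f (Finset.univ.filter (fun i => X i ω = 1)) ∂μ := by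
  have hdecr : ∀ A : Finset (Fin n),
      ∫ ω, partialMultilinear f (fun j => ∫ ω, X j ω ∂μ) A (univ.filter fun j => X j ω = 1) ∂μ ≤
        ∫ ω, f (univ.filter fun j => X j ω = 1) ∂μ := by
    intro A
    induction A using Finset.induction_on with
    | empty => simp only [partialMultilinear_empty, le_refl]
    | insert i A hi ih =>
      exact (integral_partialMultilinear_insert_le hmeas h01 hNA hf hi).trans ih
  simpa [partialMultilinear_univ] using hdecr univ
end

section
/- Let a finite ground set E be partitioned into a set L and buckets B_1, …, B_m, and let x ∈ [0,1]^E satisfy Σ_{i∈B_b} x_i ≤ 1 for every bucket b. Let T be the random subset of E obtained as follows, with all choices mutually independent: each i ∈ L is included independently with probability x_i; and for each bucket b, at most one element of B_b is included, where element i ∈ B_b is the included one with probability x_i (and no element of B_b is included with probability 1 − Σ_{i∈B_b} x_i). Then for every submodular function f : 2^E → ℝ one has E[f(T)] ≥ F(x), where F is the multilinear extension of f. -/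
/-- The probability that the random set `T` of Statement 15 equals `A`, where the ground
set is partitioned into `L` and buckets `B_1, …, B_m`: each `i ∈ L` is included
independently with probability `x_i`; independently, for each bucket `b` at most one
element is included, element `i ∈ B_b` with probability `x_i` and no element with
probability `1 − ∑_{i∈B_b} x_i`. -/
noncomputable def bucketLaw {E : Type} [Fintype E] [DecidableEq E]
    (m : ℕ) (L : Finset E) (B : Fin m → Finset E) (x : E → ℝ) (A : Finset E) : ℝ :=
  (∏ i ∈ A ∩ L, x i) * (∏ i ∈ L \ A, (1 - x i)) *
    ∏ b : Fin m,
      (if (A ∩ B b).card = 1 then ∑ i ∈ A ∩ B b, x i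
       else if A ∩ B b = ∅ then 1 - ∑ i ∈ B b, x i else 0)

namespace Stmt15Aux

variable {E : Type} [DecidableEq E]

/-- Independent-sampling weight of `A` restricted to coordinates in `S`. -/
noncomputable def ind (x : E → ℝ) (S A : Finset E) : ℝ :=
  (∏ i ∈ A ∩ S, x i) * ∏ i ∈ S \ A, (1 - x i)

/-- Correlated bucket factor for bucket `b`. -/
noncomputable def buk {m : ℕ} (B : Fin m → Finset E) (x : E → ℝ) (b : Fin m)
    (A : Finset E) : ℝ :=
  if (A ∩ B b).card = 1 then ∑ i ∈ A ∩ B b, x i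
  else if A ∩ B b = ∅ then 1 - ∑ i ∈ B b, x i else 0

/-- Hybrid law: buckets in `D` correlated, remaining buckets independent. -/
noncomputable def hybrid [Fintype E] {m : ℕ} (L : Finset E) (B : Fin m → Finset E)
    (x : E → ℝ) (D : Finset (Fin m)) (A : Finset E) : ℝ :=
  ind x L A * (∏ b ∈ D, buk B x b A) * ∏ b ∈ Dᶜ, ind x (B b) A

lemma ind_nonneg (x : E → ℝ) (hx : ∀ i, 0 ≤ x i ∧ x i ≤ 1) (S A : Finset E) :
    0 ≤ ind x S A := by
  apply mul_nonneg
  · exact Finset.prod_nonneg fun i _ => (hx i).1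
  · exact Finset.prod_nonneg fun i _ => by linarith [(hx i).2]

lemma buk_nonneg {m : ℕ} (B : Fin m → Finset E) (x : E → ℝ)
    (hx : ∀ i, 0 ≤ x i ∧ x i ≤ 1) (hbsum : ∀ b, ∑ i ∈ B b, x i ≤ 1)
    (b : Fin m) (A : Finset E) : 0 ≤ buk B x b A := by
  unfold buk
  by_cases h1 : (A ∩ B b).card = 1
  · rw [if_pos h1]; exact Finset.sum_nonneg fun i _ => (hx i).1
  · rw [if_neg h1]
    by_cases h2 : A ∩ B b = ∅
    · rw [if_pos h2]; linarith [hbsum b]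
    · rw [if_neg h2]

/-- Total mass of the independent law on subsets of `S` is 1. -/
lemma sum_prob_one (S : Finset E) (x : E → ℝ) :
    ∑ t ∈ S.powerset, (∏ i ∈ t, x i) * ∏ i ∈ S \ t, (1 - x i) = 1 := by
  rw [← Finset.prod_add]
  simp

/-- Marginal of the independent law: the probability that `e` is included is `x e`. -/
lemma marginal (S : Finset E) (x : E → ℝ) (e : E) (he : e ∈ S) :
    ∑ t ∈ S.powerset, (if e ∈ t then (∏ i ∈ t, x i) * ∏ i ∈ S \ t, (1 - x i) else 0)
      = x e := by
  have h := Finset.prod_add (f := x) (g := fun j => if j = e then 0 else 1 - x j) (s := S)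
  have hL : ∏ i ∈ S, (x i + if i = e then 0 else 1 - x i) = x e := by
    rw [show (fun i => x i + if i = e then 0 else 1 - x i)
        = fun i => if i = e then x e else 1 from ?_]
    · rw [Finset.prod_ite_eq' S e (fun _ => x e)]; simp [he]
    · funext i; by_cases hi : i = e <;> simp [hi]
  rw [← hL, h]
  apply Finset.sum_congr rfl
  intro t ht
  rw [Finset.mem_powerset] at ht
  by_cases het : e ∈ t
  · rw [if_pos het]
    congr 1
    apply Finset.prod_congr rfl
    intro i hi
    rw [if_neg]
    rintro rfl
    exact (Finset.mem_sdiff.mp hi).2 het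
  · rw [if_neg het]
    have : e ∈ S \ t := Finset.mem_sdiff.mpr ⟨he, het⟩
    rw [Finset.prod_eq_zero this (by simp), mul_zero]

/-- Split a sum over all subsets of `E` according to the part inside `S`. -/
lemma sum_split [Fintype E] (S : Finset E) (G : Finset E → ℝ) :
    ∑ A : Finset E, G A = ∑ C ∈ S.powerset, ∑ R ∈ Sᶜ.powerset, G (C ∪ R) := by
  rw [← Finset.sum_product']
  apply Finset.sum_nbij' (i := fun A => (A ∩ S, A \ S)) (j := fun p => p.1 ∪ p.2)
  · intro A _
    simp only [Finset.mem_product, Finset.mem_powerset]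
    exact ⟨Finset.inter_subset_right, fun i hi => by
      simp only [Finset.mem_compl]; exact (Finset.mem_sdiff.mp hi).2⟩
  · intro p _; exact Finset.mem_univ _
  · intro A _
    simp only
    ext i; simp only [Finset.mem_union, Finset.mem_inter, Finset.mem_sdiff]; tauto
  · intro p hp
    simp only [Finset.mem_product, Finset.mem_powerset] at hp
    obtain ⟨h1, h2⟩ := hp
    have hd : ∀ i ∈ p.2, i ∉ S := fun i hi => Finset.mem_compl.mp (h2 hi)
    have e1 : (p.1 ∪ p.2) ∩ S = p.1 := by
      ext i
      simp only [Finset.mem_inter, Finset.mem_union]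
      constructor
      · rintro ⟨h | h, hs⟩
        · exact h
        · exact absurd hs (hd i h)
      · intro h; exact ⟨Or.inl h, h1 h⟩
    have e2 : (p.1 ∪ p.2) \ S = p.2 := by
      ext i
      simp only [Finset.mem_sdiff, Finset.mem_union]
      constructor
      · rintro ⟨h | h, hs⟩
        · exact absurd (h1 h) hs
        · exact h
      · intro h; exact ⟨Or.inr h, hd i h⟩
    ext <;> simp [e1, e2]
  · intro A _
    congr 1
    ext i; simp only [Finset.mem_union, Finset.mem_inter, Finset.mem_sdiff]; tauto

/-- Submodular chain bound: `f(C ∪ R) ≤ f(R) + ∑_{i∈C} (f(R+i) − f(R))`. -/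
lemma chain (f : Finset E → ℝ) (hf : Submodular f) (R : Finset E) :
    ∀ C : Finset E, Disjoint C R →
      f (C ∪ R) ≤ f R + ∑ i ∈ C, (f (insert i R) - f R) := by
  intro C
  induction C using Finset.induction_on with
  | empty => simp
  | @insert e C he ih =>
    intro hd
    have hd' : Disjoint C R := (Finset.disjoint_insert_left.mp hd).2
    have heR : e ∉ R := (Finset.disjoint_insert_left.mp hd).1
    have heCR : e ∉ C ∪ R := by simp [he, heR]
    have h1 : f (insert e (C ∪ R)) - f (C ∪ R) ≤ f (insert e R) - f R :=
      hf R (C ∪ R) Finset.subset_union_right e heCR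
    have h2 := ih hd'
    rw [Finset.insert_union, Finset.sum_insert he]
    linarith

/-- Evaluation of the correlated-law expectation over one bucket. -/
lemma rhs_eval (S : Finset E) (x : E → ℝ) (h : Finset E → ℝ) :
    ∑ C ∈ S.powerset, h C *
      (if C.card = 1 then ∑ i ∈ C, x i else if C = ∅ then 1 - ∑ i ∈ S, x i else 0)
    = (1 - ∑ i ∈ S, x i) * h ∅ + ∑ i ∈ S, x i * h {i} := by
  have step : ∀ C ∈ S.powerset, h C *
      (if C.card = 1 then ∑ i ∈ C, x i else if C = ∅ then 1 - ∑ i ∈ S, x i else 0)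
      = (if C.card = 1 then h C * ∑ i ∈ C, x i
         else if C = ∅ then h C * (1 - ∑ i ∈ S, x i) else 0) := by
    intro C _
    by_cases h1 : C.card = 1
    · simp [h1]
    · by_cases h2 : C = ∅ <;> simp [h1, h2]
  rw [Finset.sum_congr rfl step, Finset.sum_ite]
  have e1 : S.powerset.filter (fun C => C.card = 1)
      = S.map ⟨singleton, Finset.singleton_injective⟩ := by
    rw [← Finset.powersetCard_one, Finset.powersetCard_eq_filter]
  rw [e1, Finset.sum_map]
  have e2 : ∑ i ∈ S, h {i} * ∑ j ∈ ({i} : Finset E), x j = ∑ i ∈ S, x i * h {i} := by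
    apply Finset.sum_congr rfl; intro i _; rw [Finset.sum_singleton, mul_comm]
  have e3 : ∑ C ∈ (S.powerset.filter (fun C => ¬ C.card = 1)),
      (if C = ∅ then h C * (1 - ∑ i ∈ S, x i) else 0)
      = h ∅ * (1 - ∑ i ∈ S, x i) := by
    rw [Finset.sum_ite_eq' (Finset.filter _ S.powerset) ∅
      (fun C => h C * (1 - ∑ i ∈ S, x i))]
    rw [if_pos]
    simp
  simp only [Function.Embedding.coeFn_mk] at *
  rw [e2, e3]
  ring

/-- The core single-bucket inequality: independent sampling within a bucket gives at most
the correlated (at-most-one-element) sampling in expectation, for submodular `f`. -/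
lemma core (S R : Finset E) (hSR : Disjoint S R) (x : E → ℝ)
    (hx : ∀ i, 0 ≤ x i ∧ x i ≤ 1)
    (f : Finset E → ℝ) (hf : Submodular f) :
    ∑ C ∈ S.powerset, f (C ∪ R) * ((∏ i ∈ C, x i) * ∏ i ∈ S \ C, (1 - x i))
    ≤ ∑ C ∈ S.powerset, f (C ∪ R) *
        (if C.card = 1 then ∑ i ∈ C, x i else if C = ∅ then 1 - ∑ i ∈ S, x i else 0) := by
  set p : Finset E → ℝ := fun C => (∏ i ∈ C, x i) * ∏ i ∈ S \ C, (1 - x i) with hp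
  have hpnn : ∀ C, 0 ≤ p C := by
    intro C
    apply mul_nonneg (Finset.prod_nonneg fun i _ => (hx i).1)
    exact Finset.prod_nonneg fun i _ => by linarith [(hx i).2]
  set d : E → ℝ := fun i => f (insert i R) - f R with hdd
  have step1 : ∑ C ∈ S.powerset, f (C ∪ R) * p C
      ≤ ∑ C ∈ S.powerset, (f R + ∑ i ∈ C, d i) * p C := by
    apply Finset.sum_le_sum
    intro C hC
    have hCS : C ⊆ S := Finset.mem_powerset.mp hC
    have hCR : Disjoint C R := Finset.disjoint_of_subset_left hCS hSR
    exact mul_le_mul_of_nonneg_right (chain f hf R C hCR) (hpnn C)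
  have step2 : ∑ C ∈ S.powerset, (f R + ∑ i ∈ C, d i) * p C
      = f R + ∑ i ∈ S, x i * d i := by
    have expand : ∀ C ∈ S.powerset, (f R + ∑ i ∈ C, d i) * p C
        = f R * p C + ∑ i ∈ S, (if i ∈ C then p C else 0) * d i := by
      intro C hC
      have hCS : C ⊆ S := Finset.mem_powerset.mp hC
      have : ∑ i ∈ C, d i = ∑ i ∈ S, (if i ∈ C then d i else 0) := by
        rw [Finset.sum_ite_mem, Finset.inter_eq_right.mpr hCS]
      rw [this, add_mul, Finset.sum_mul]
      congr 1
      apply Finset.sum_congr rfl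
      intro i _
      by_cases hi : i ∈ C <;> simp [hi, mul_comm]
    rw [Finset.sum_congr rfl expand, Finset.sum_add_distrib, ← Finset.mul_sum,
      sum_prob_one S x, mul_one, Finset.sum_comm]
    congr 1
    apply Finset.sum_congr rfl
    intro i hi
    rw [← Finset.sum_mul, marginal S x i hi]
  have step3 : ∑ C ∈ S.powerset, f (C ∪ R) *
      (if C.card = 1 then ∑ i ∈ C, x i else if C = ∅ then 1 - ∑ i ∈ S, x i else 0)
      = f R + ∑ i ∈ S, x i * d i := by
    rw [rhs_eval S x (fun C => f (C ∪ R))]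
    have hsing : ∀ i : E, ({i} : Finset E) ∪ R = insert i R := fun i => (Finset.insert_eq i R).symm
    simp only [Finset.empty_union, hsing, hdd]
    have : ∑ i ∈ S, x i * (f (insert i R) - f R)
        = ∑ i ∈ S, x i * f (insert i R) - (∑ i ∈ S, x i) * f R := by
      rw [Finset.sum_mul]
      rw [← Finset.sum_sub_distrib]
      apply Finset.sum_congr rfl
      intro i _; ring
    rw [this]
    ring
  calc ∑ C ∈ S.powerset, f (C ∪ R) * p C
      ≤ ∑ C ∈ S.powerset, (f R + ∑ i ∈ C, d i) * p C := step1
    _ = f R + ∑ i ∈ S, x i * d i := step2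
    _ = _ := step3.symm

/-- If `C` is disjoint from `T`, then `A`-parts relative to `T` ignore `C`. -/
lemma inter_union_left (C R T : Finset E) (h : Disjoint C T) :
    (C ∪ R) ∩ T = R ∩ T ∧ T \ (C ∪ R) = T \ R := by
  rw [Finset.disjoint_left] at h
  constructor <;> ext i <;>
    simp only [Finset.mem_inter, Finset.mem_union, Finset.mem_sdiff] <;>
    constructor
  · rintro ⟨h1 | h1, h2⟩
    · exact absurd h2 (h h1)
    · exact ⟨h1, h2⟩
  · rintro ⟨h1, h2⟩; exact ⟨Or.inr h1, h2⟩
  · rintro ⟨h1, h2⟩; exact ⟨h1, fun hr => h2 (Or.inr hr)⟩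
  · rintro ⟨h1, h2⟩
    refine ⟨h1, ?_⟩
    rintro (hc | hr)
    · exact h hc h1
    · exact h2 hr

lemma ind_union (x : E → ℝ) (C R T : Finset E) (h : Disjoint C T) :
    ind x T (C ∪ R) = ind x T R := by
  obtain ⟨e1, e2⟩ := inter_union_left C R T h
  unfold ind
  rw [e1, e2]

lemma buk_union {m : ℕ} (B : Fin m → Finset E) (x : E → ℝ) (b : Fin m)
    (C R : Finset E) (h : Disjoint C (B b)) :
    buk B x b (C ∪ R) = buk B x b R := by
  obtain ⟨e1, _⟩ := inter_union_left C R (B b) h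
  unfold buk
  rw [e1]

end Stmt15Aux

open Stmt15Aux

/-- Let `E` be partitioned into `L` and buckets `B_1, …, B_m`, and `x ∈ [0,1]^E` with
`∑_{i∈B_b} x_i ≤ 1` for every `b`. Let `T` be random as in `bucketLaw`. Then for every
submodular `f : 2^E → ℝ`, `E[f(T)] ≥ F(x)`. -/
theorem statement15 {E : Type} [Fintype E] [DecidableEq E]
    (m : ℕ) (L : Finset E) (B : Fin m → Finset E)
    (hdisjLB : ∀ b, Disjoint L (B b))
    (hdisjBB : ∀ b b' : Fin m, b ≠ b' → Disjoint (B b) (B b'))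
    (hcover : ∀ i : E, i ∈ L ∨ ∃ b, i ∈ B b)
    (x : E → ℝ) (hx : ∀ i, 0 ≤ x i ∧ x i ≤ 1)
    (hbsum : ∀ b, ∑ i ∈ B b, x i ≤ 1)
    (f : Finset E → ℝ) (hf : Submodular f) :
    multilinear f x ≤ ∑ A : Finset E, f A * bucketLaw m L B x A := by
  -- Step 1: the hybrid law with no correlated bucket is the independent (multilinear) law
  have h0 : multilinear f x = ∑ A : Finset E, f A * hybrid L B x ∅ A := by
    unfold multilinear
    apply Finset.sum_congr rfl
    intro A _
    have hw : ∀ S : Finset E, ind x S A = ∏ i ∈ S, (if i ∈ A then x i else 1 - x i) := by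
      intro S
      have hdisj : Disjoint (A ∩ S) (S \ A) := by
        rw [Finset.disjoint_left]
        intro i hi hj
        exact (Finset.mem_sdiff.mp hj).2 (Finset.mem_inter.mp hi).1
      have hun : (A ∩ S) ∪ (S \ A) = S := by
        ext i
        simp only [Finset.mem_union, Finset.mem_inter, Finset.mem_sdiff]
        tauto
      unfold ind
      calc (∏ i ∈ A ∩ S, x i) * ∏ i ∈ S \ A, (1 - x i)
          = (∏ i ∈ A ∩ S, (if i ∈ A then x i else 1 - x i)) *
            ∏ i ∈ S \ A, (if i ∈ A then x i else 1 - x i) := by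
            congr 1
            · apply Finset.prod_congr rfl
              intro i hi
              rw [if_pos (Finset.mem_inter.mp hi).1]
            · apply Finset.prod_congr rfl
              intro i hi
              rw [if_neg (Finset.mem_sdiff.mp hi).2]
        _ = ∏ i ∈ (A ∩ S) ∪ (S \ A), (if i ∈ A then x i else 1 - x i) :=
            (Finset.prod_union hdisj).symm
        _ = ∏ i ∈ S, (if i ∈ A then x i else 1 - x i) := by rw [hun]
    have hpart : hybrid L B x ∅ A
        = ∏ i : E, (if i ∈ A then x i else 1 - x i) := by
      unfold hybrid
      rw [Finset.prod_empty, mul_one, Finset.compl_empty]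
      have hbd : ∏ b : Fin m, ind x (B b) A
          = ∏ i ∈ Finset.univ.biUnion B, (if i ∈ A then x i else 1 - x i) := by
        rw [Finset.prod_biUnion]
        · apply Finset.prod_congr rfl
          intro b _
          exact hw (B b)
        · intro b _ b' _ hbb'
          exact hdisjBB b b' hbb'
      have hunL : L ∪ Finset.univ.biUnion B = Finset.univ := by
        apply Finset.eq_univ_of_forall
        intro i
        simp only [Finset.mem_union, Finset.mem_biUnion, Finset.mem_univ, true_and]
        exact hcover i
      have hdLB : Disjoint L (Finset.univ.biUnion B) := by
        rw [Finset.disjoint_biUnion_right]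
        intro b _
        exact hdisjLB b
      rw [hw L, hbd, ← Finset.prod_union hdLB, hunL]
    rw [hpart]
    have : (∏ i ∈ A, x i) * ∏ i ∈ Aᶜ, (1 - x i)
        = ∏ i : E, (if i ∈ A then x i else 1 - x i) := by
      calc (∏ i ∈ A, x i) * ∏ i ∈ Aᶜ, (1 - x i)
          = (∏ i ∈ A, (if i ∈ A then x i else 1 - x i)) *
            ∏ i ∈ Aᶜ, (if i ∈ A then x i else 1 - x i) := by
            congr 1
            · apply Finset.prod_congr rfl
              intro i hi; rw [if_pos hi]
            · apply Finset.prod_congr rfl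
              intro i hi; rw [if_neg (Finset.mem_compl.mp hi)]
        _ = ∏ i ∈ A ∪ Aᶜ, (if i ∈ A then x i else 1 - x i) :=
            (Finset.prod_union disjoint_compl_right).symm
        _ = ∏ i : E, (if i ∈ A then x i else 1 - x i) := by rw [Finset.union_compl]
    rw [← this, mul_assoc]
  -- Step 2: the hybrid law with all buckets correlated is the bucket law
  have hU : ∀ A, hybrid L B x Finset.univ A = bucketLaw m L B x A := by
    intro A
    unfold hybrid bucketLaw ind buk
    rw [Finset.compl_univ, Finset.prod_empty, mul_one]
  -- Step 3: correlating one more bucket only increases the expectation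
  have hstep : ∀ (D : Finset (Fin m)) (b : Fin m), b ∉ D →
      ∑ A : Finset E, f A * hybrid L B x D A
        ≤ ∑ A : Finset E, f A * hybrid L B x (insert b D) A := by
    intro D b hb
    set rest : Finset E → ℝ := fun A =>
      ind x L A * (∏ b' ∈ D, buk B x b' A) * ∏ b' ∈ (insert b D)ᶜ, ind x (B b') A
      with hrest
    have hrest_nn : ∀ A, 0 ≤ rest A := by
      intro A
      apply mul_nonneg (mul_nonneg (ind_nonneg x hx L A) ?_) ?_
      · exact Finset.prod_nonneg fun b' _ => buk_nonneg B x hx hbsum b' A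
      · exact Finset.prod_nonneg fun b' _ => ind_nonneg x hx (B b') A
    have hD : ∀ A, hybrid L B x D A = rest A * ind x (B b) A := by
      intro A
      unfold hybrid
      have : Dᶜ = insert b ((insert b D)ᶜ) := by
        rw [Finset.compl_insert, Finset.insert_erase (Finset.mem_compl.mpr hb)]
      rw [this, Finset.prod_insert (by simp)]
      ring
    have hD' : ∀ A, hybrid L B x (insert b D) A = rest A * buk B x b A := by
      intro A
      unfold hybrid
      rw [Finset.prod_insert hb]
      ring
    -- invariance of `rest` under changing the part inside bucket `b`
    have hrest_inv : ∀ C ∈ (B b).powerset, ∀ R ∈ (B b)ᶜ.powerset,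
        rest (C ∪ R) = rest R := by
      intro C hC R _
      have hCB : C ⊆ B b := Finset.mem_powerset.mp hC
      rw [hrest]
      simp only
      congr 1
      · congr 1
        · exact ind_union x C R L
            (Finset.disjoint_of_subset_left hCB (hdisjLB b).symm)
        · apply Finset.prod_congr rfl
          intro b' hb'
          have hbb' : b ≠ b' := fun h => hb (h ▸ hb')
          exact buk_union B x b' C R
            (Finset.disjoint_of_subset_left hCB (hdisjBB b b' hbb'))
      · apply Finset.prod_congr rfl
        intro b' hb'
        have hbb' : b ≠ b' := by
          rintro rfl
          exact (Finset.mem_compl.mp hb') (Finset.mem_insert_self b D)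
        exact ind_union x C R (B b')
          (Finset.disjoint_of_subset_left hCB (hdisjBB b b' hbb'))
    have hindCR : ∀ C ∈ (B b).powerset, ∀ R ∈ (B b)ᶜ.powerset,
        ind x (B b) (C ∪ R) = (∏ i ∈ C, x i) * ∏ i ∈ B b \ C, (1 - x i) := by
      intro C hC R hR
      have hCB : C ⊆ B b := Finset.mem_powerset.mp hC
      have hRB : Disjoint R (B b) := by
        rw [Finset.disjoint_left]
        intro i hi
        exact Finset.mem_compl.mp (Finset.mem_powerset.mp hR hi)
      have e1 : (C ∪ R) ∩ B b = C := by
        ext i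
        simp only [Finset.mem_inter, Finset.mem_union]
        constructor
        · rintro ⟨hc | hr, hB⟩
          · exact hc
          · exact absurd hB (Finset.disjoint_left.mp hRB hr)
        · intro h; exact ⟨Or.inl h, hCB h⟩
      have e2 : B b \ (C ∪ R) = B b \ C := by
        ext i
        simp only [Finset.mem_sdiff, Finset.mem_union]
        constructor
        · rintro ⟨h1, h2⟩; exact ⟨h1, fun hc => h2 (Or.inl hc)⟩
        · rintro ⟨h1, h2⟩
          refine ⟨h1, ?_⟩
          rintro (hc | hr)
          · exact h2 hc
          · exact Finset.disjoint_left.mp hRB hr h1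
      unfold ind
      rw [e1, e2]
    have hbukCR : ∀ C ∈ (B b).powerset, ∀ R ∈ (B b)ᶜ.powerset,
        buk B x b (C ∪ R)
          = (if C.card = 1 then ∑ i ∈ C, x i
             else if C = ∅ then 1 - ∑ i ∈ B b, x i else 0) := by
      intro C hC R hR
      have hCB : C ⊆ B b := Finset.mem_powerset.mp hC
      have hRB : Disjoint R (B b) := by
        rw [Finset.disjoint_left]
        intro i hi
        exact Finset.mem_compl.mp (Finset.mem_powerset.mp hR hi)
      have e1 : (C ∪ R) ∩ B b = C := by
        ext i
        simp only [Finset.mem_inter, Finset.mem_union]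
        constructor
        · rintro ⟨hc | hr, hB⟩
          · exact hc
          · exact absurd hB (Finset.disjoint_left.mp hRB hr)
        · intro h; exact ⟨Or.inl h, hCB h⟩
      unfold buk
      rw [e1]
    rw [sum_split (B b) (fun A => f A * hybrid L B x D A),
      sum_split (B b) (fun A => f A * hybrid L B x (insert b D) A),
      Finset.sum_comm, Finset.sum_comm (s := (B b).powerset)]
    apply Finset.sum_le_sum
    intro R hR
    have lhs_eq : ∑ C ∈ (B b).powerset, f (C ∪ R) * hybrid L B x D (C ∪ R)
        = rest R * ∑ C ∈ (B b).powerset,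
            f (C ∪ R) * ((∏ i ∈ C, x i) * ∏ i ∈ B b \ C, (1 - x i)) := by
      rw [Finset.mul_sum]
      apply Finset.sum_congr rfl
      intro C hC
      rw [hD, hrest_inv C hC R hR, hindCR C hC R hR]
      ring
    have rhs_eq : ∑ C ∈ (B b).powerset, f (C ∪ R) * hybrid L B x (insert b D) (C ∪ R)
        = rest R * ∑ C ∈ (B b).powerset,
            f (C ∪ R) * (if C.card = 1 then ∑ i ∈ C, x i
              else if C = ∅ then 1 - ∑ i ∈ B b, x i else 0) := by
      rw [Finset.mul_sum]
      apply Finset.sum_congr rfl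
      intro C hC
      rw [hD', hrest_inv C hC R hR, hbukCR C hC R hR]
      ring
    rw [lhs_eq, rhs_eq]
    apply mul_le_mul_of_nonneg_left _ (hrest_nn R)
    have hSR : Disjoint (B b) R := by
      rw [Finset.disjoint_right]
      intro i hi
      exact Finset.mem_compl.mp (Finset.mem_powerset.mp hR hi)
    exact core (B b) R hSR x hx f hf
  -- Step 4: induction over the set of correlated buckets
  have key : ∀ D : Finset (Fin m),
      ∑ A : Finset E, f A * hybrid L B x ∅ A
        ≤ ∑ A : Finset E, f A * hybrid L B x D A := by
    intro D
    induction D using Finset.induction_on with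
    | empty => exact le_refl _
    | @insert b D hb ih => exact ih.trans (hstep D b hb)
  calc multilinear f x = ∑ A : Finset E, f A * hybrid L B x ∅ A := h0
    _ ≤ ∑ A : Finset E, f A * hybrid L B x Finset.univ A := key Finset.univ
    _ = ∑ A : Finset E, f A * bucketLaw m L B x A := by
        apply Finset.sum_congr rfl
        intro A _
        rw [hU A]
end
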